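/- arXiv:2105.10597 — 2 statements merged into one kernel-verified Lean document; each statement's English description precedes it below -/
import Mathlib

section
/- Consider the general mean-field system (λ^A, λ^B) and write ℓ̲_A = liminf_{t→∞} λ^A(t), ℓ̄_A = limsup_{t→∞} λ^A(t), ℓ̲_B = liminf_{t→∞} λ^B(t), ℓ̄_B = limsup_{t→∞} λ^B(t) (values in [0,∞]). Then: (i) if ℓ̲_A < ∞ then ℓ̲_B ≥ Φ_{A→B}(κ₄ ℓ̲_A), and if ℓ̲_A = ∞ and κ₄ > 0 then ℓ̲_B = ∞; (ii) if ℓ̄_A < ∞ and ℓ̄_B < ∞ then ℓ̄_B ≤ Φ_B(0) + ‖Φ_B‖_L κ₃ ℓ̄_B + Φ_{A→B}(κ₄ ℓ̄_A). Moreover, for the linear mean-field system: (iii) if ℓ̲_A < ∞ and ℓ̲_B < ∞ then ℓ̲_B ≥ μ_B + κ₃ ℓ̲_B + Φ_{A→B}(κ₄ ℓ̲_A); (iv) if ℓ̄_B < ∞ and ℓ̲_A < ∞ then ℓ̲_A ≥ (μ_A + κ₁ ℓ̲_A) · Φ_{B→A}(κ₂ ℓ̄_B). -/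
open MeasureTheory Filter Topology Set
open scoped ENNReal

/-- Convolution term `∫₀ᵗ h(t-u) f(u) du`. -/
noncomputable def convK (h f : ℝ → ℝ) (t : ℝ) : ℝ :=
  ∫ u in (0:ℝ)..t, h (t - u) * f u

/-- `L¹` norm on `[0,∞)` of a kernel. -/
noncomputable def l1 (h : ℝ → ℝ) : ℝ :=
  ∫ s in Set.Ioi (0:ℝ), h s

/-- A nonnegative measurable kernel with finite `L¹` norm on `[0,∞)`. -/
def KernelL1 (h : ℝ → ℝ) : Prop :=
  Measurable h ∧ (∀ u, 0 ≤ u → 0 ≤ h u) ∧ IntegrableOn h (Set.Ioi 0)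

/-- A nonnegative integrable kernel vanishing at infinity. -/
def KernelOK (h : ℝ → ℝ) : Prop :=
  KernelL1 h ∧ Tendsto h atTop (𝓝 0)

/-- Properties of the inhibition kernel `Φ_{B→A}`. -/
def InhibOK (Φ : ℝ → ℝ) : Prop :=
  (∃ K, 0 ≤ K ∧ ∀ x y, 0 ≤ x → 0 ≤ y → |Φ x - Φ y| ≤ K * |x - y|) ∧
  AntitoneOn Φ (Set.Ici 0) ∧ Φ 0 = 1 ∧
  (∀ x, 0 ≤ x → 0 ≤ Φ x ∧ Φ x ≤ 1) ∧
  Tendsto Φ atTop (𝓝 0)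

/-- Properties of the feedback kernel `Φ_{A→B}`. -/
def FeedOK (Φ : ℝ → ℝ) : Prop :=
  (∃ K, 0 ≤ K ∧ ∀ x y, 0 ≤ x → 0 ≤ y → |Φ x - Φ y| ≤ K * |x - y|) ∧
  MonotoneOn Φ (Set.Ici 0) ∧ Φ 0 = 0 ∧
  (∀ x, 0 ≤ x → 0 ≤ Φ x) ∧
  Tendsto Φ atTop atTop

/-- The general mean-field system of intensities. -/
def IsGenSys (α : ℝ) (h₁ h₂ h₃ h₄ ΦA ΦB ΦBA ΦAB lA lB : ℝ → ℝ) : Prop :=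
  Continuous lA ∧ Continuous lB ∧ (∀ t, 0 ≤ lA t) ∧ (∀ t, 0 ≤ lB t) ∧
  (∀ t, 0 ≤ t →
    lA t = ΦA (α * convK h₁ lA t) * ΦBA ((1 - α) * convK h₂ lB t)) ∧
  (∀ t, 0 ≤ t →
    lB t = ΦB ((1 - α) * convK h₃ lB t) + ΦAB (α * convK h₄ lA t))

/-- The linear mean-field system: `Φ_A(x) = μ_A + x` and `Φ_B(x) = μ_B + x`. -/
def IsLinSys (α : ℝ) (h₁ h₂ h₃ h₄ ΦBA ΦAB : ℝ → ℝ) (μA μB : ℝ)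
    (lA lB : ℝ → ℝ) : Prop :=
  IsGenSys α h₁ h₂ h₃ h₄ (fun x => μA + x) (fun x => μB + x) ΦBA ΦAB lA lB

/-- `limsup_{t→∞} f(t)` with values in `[0,∞]`. -/
noncomputable def elimsup (f : ℝ → ℝ) : ℝ≥0∞ :=
  Filter.limsup (fun t => ENNReal.ofReal (f t)) Filter.atTop

/-- `liminf_{t→∞} f(t)` with values in `[0,∞]`. -/
noncomputable def eliminf (f : ℝ → ℝ) : ℝ≥0∞ :=
  Filter.liminf (fun t => ENNReal.ofReal (f t)) Filter.atTop

/-- The domain `I_{κ₁,κ₂} = {x ≥ 0 : κ₁ Φ_{B→A}(κ₂ x) < 1}`. -/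
def Idom (κ₁ κ₂ : ℝ) (ΦBA : ℝ → ℝ) : Set ℝ :=
  {x : ℝ | 0 ≤ x ∧ κ₁ * ΦBA (κ₂ * x) < 1}

/-- `Ψ₁(x) = μ_A Φ_{B→A}(κ₂x)/(1 - κ₁Φ_{B→A}(κ₂x))`. -/
noncomputable def Psi1 (μA κ₁ κ₂ : ℝ) (ΦBA : ℝ → ℝ) (x : ℝ) : ℝ :=
  μA * ΦBA (κ₂ * x) / (1 - κ₁ * ΦBA (κ₂ * x))

/-- `Ψ₂(x) = (μ_B + Φ_{A→B}(κ₄x))/(1-κ₃)`. -/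
noncomputable def Psi2 (μB κ₃ κ₄ : ℝ) (ΦAB : ℝ → ℝ) (x : ℝ) : ℝ :=
  (μB + ΦAB (κ₄ * x)) / (1 - κ₃)

/-- The fixed-point map `Φ = Ψ₂ ∘ Ψ₁`. -/
noncomputable def PhiMap (μA μB κ₁ κ₂ κ₃ κ₄ : ℝ) (ΦBA ΦAB : ℝ → ℝ) (x : ℝ) : ℝ :=
  Psi2 μB κ₃ κ₄ ΦAB (Psi1 μA κ₁ κ₂ ΦBA x)

/-- The set `U_Φ` of admissible pairs `(u,v)`. -/
def UPhi (μA μB κ₁ κ₂ κ₃ κ₄ : ℝ) (ΦBA ΦAB : ℝ → ℝ) (ℓ : ℝ) : Set (ℝ × ℝ) :=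
  {p : ℝ × ℝ | p.1 ∈ Idom κ₁ κ₂ ΦBA ∧ p.2 ∈ Idom κ₁ κ₂ ΦBA ∧
    PhiMap μA μB κ₁ κ₂ κ₃ κ₄ ΦBA ΦAB p.2 ≤ p.1 ∧ p.1 ≤ ℓ ∧ ℓ ≤ p.2 ∧
    p.2 ≤ PhiMap μA μB κ₁ κ₂ κ₃ κ₄ ΦBA ΦAB p.1 ∧ μB / (1 - κ₃) ≤ p.1}

/-!
Every claim is obtained by passing to the lower or upper limit in one equation of the system.
The key fact is that convolution with a nonnegative integrable kernel `h` turns a lower (upper)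
limit `ℓ` of `f` into a lower (upper) limit `‖h‖₁ ℓ` of `h ⋆ f`: for large `t` the mass of `h`
near the origin sees only the tail of `f`, while any bounded initial segment of `f` is weighted
by the vanishing tail of `h`. Lower and upper limits then pass through sums, nonnegative scalings,
products of nonnegative functions and continuous monotone maps (antitone ones swap them).
-/

/-- `x ≤ liminf_{t→∞} f t`, phrased without the boundedness side conditions of
`Filter.liminf` on `ℝ`. -/
def LiminfGE (f : ℝ → ℝ) (x : ℝ) : Prop :=
  ∀ y < x, ∀ᶠ t in atTop, y ≤ f t

/-- `limsup_{t→∞} f t ≤ x`, phrased without the boundedness side conditions of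
`Filter.limsup` on `ℝ`. -/
def LimsupLE (f : ℝ → ℝ) (x : ℝ) : Prop :=
  ∀ y > x, ∀ᶠ t in atTop, f t ≤ y

namespace LiminfGE

variable {f g : ℝ → ℝ} {x y : ℝ}

lemma of_eventually_le (h : ∀ᶠ t in atTop, x ≤ f t) : LiminfGE f x :=
  fun _ hy => h.mono fun _ ht => hy.le.trans ht

lemma const (c : ℝ) : LiminfGE (fun _ => c) c :=
  of_eventually_le (.of_forall fun _ => le_rfl)

lemma mono (hf : LiminfGE f x) (hfg : ∀ᶠ t in atTop, f t ≤ g t) : LiminfGE g x :=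
  fun y hy => ((hf y hy).and hfg).mono fun _ ht => ht.1.trans ht.2

lemma add (hf : LiminfGE f x) (hg : LiminfGE g y) : LiminfGE (fun t => f t + g t) (x + y) := by
  intro z hz
  filter_upwards [hf (x - (x + y - z) / 2) (by linarith),
    hg (y - (x + y - z) / 2) (by linarith)] with t hft hgt
  linarith

lemma const_mul (hf : LiminfGE f x) {c : ℝ} (hc : 0 ≤ c) :
    LiminfGE (fun t => c * f t) (c * x) := by
  intro y hy
  rcases hc.eq_or_lt with rfl | hc
  · exact .of_forall fun _ => by simpa using hy.le
  · filter_upwards [hf (y / c) ((div_lt_iff₀' hc).2 hy)] with t ht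
    exact (div_le_iff₀' hc).1 ht

lemma mul (hf : LiminfGE f x) (hg : LiminfGE g y) (hf0 : ∀ᶠ t in atTop, 0 ≤ f t)
    (hg0 : ∀ᶠ t in atTop, 0 ≤ g t) (hy0 : 0 ≤ y) :
    LiminfGE (fun t => f t * g t) (x * y) := by
  intro z hz
  rcases lt_or_ge z 0 with hz0 | hz0
  · filter_upwards [hf0, hg0] with t hft hgt
    exact hz0.le.trans (mul_nonneg hft hgt)
  have hy : 0 < y := hy0.lt_of_ne (by rintro rfl; simp at hz; linarith)
  obtain ⟨x', hzx', hx'⟩ := exists_between ((div_lt_iff₀ hy).2 hz)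
  have hx'0 : 0 < x' := (div_nonneg hz0 hy.le).trans_lt hzx'
  have hzy : z / x' < y := (div_lt_iff₀' hx'0).2 ((div_lt_iff₀ hy).1 hzx')
  filter_upwards [hf x' hx', hg (z / x') hzy] with t hft hgt
  calc z = x' * (z / x') := by field_simp
    _ ≤ f t * g t := mul_le_mul hft hgt (div_nonneg hz0 hx'0.le) (hx'0.le.trans hft)

lemma comp_monotoneOn {Φ : ℝ → ℝ} (hg : LiminfGE g x) (hg0 : ∀ᶠ t in atTop, 0 ≤ g t)
    (hx : 0 ≤ x) (hmono : MonotoneOn Φ (Ici 0)) (hcont : ContinuousOn Φ (Ici 0)) :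
    LiminfGE (fun t => Φ (g t)) (Φ x) := by
  intro z hz
  obtain ⟨δ, hδ, hΦ⟩ := Metric.continuousWithinAt_iff.1 (hcont x hx) _ (sub_pos.2 hz)
  filter_upwards [hg (x - δ / 2) (by linarith), hg0] with t hgt hgt0
  rcases le_total x (g t) with hxg | hgx
  · exact hz.le.trans (hmono hx hgt0 hxg)
  · have hclose := hΦ hgt0 (by rw [Real.dist_eq, abs_of_nonpos (by linarith)]; linarith)
    rw [Real.dist_eq] at hclose
    linarith [(abs_sub_lt_iff.1 hclose).2]

end LiminfGE

namespace LimsupLE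

variable {f g : ℝ → ℝ} {x y : ℝ}

lemma const (c : ℝ) : LimsupLE (fun _ => c) c :=
  fun _ hy => .of_forall fun _ => hy.le

lemma mono (hf : LimsupLE f x) (hgf : ∀ᶠ t in atTop, g t ≤ f t) : LimsupLE g x :=
  fun y hy => ((hf y hy).and hgf).mono fun _ ht => ht.2.trans ht.1

lemma add (hf : LimsupLE f x) (hg : LimsupLE g y) : LimsupLE (fun t => f t + g t) (x + y) := by
  intro z hz
  filter_upwards [hf (x + (z - x - y) / 2) (by linarith),
    hg (y + (z - x - y) / 2) (by linarith)] with t hft hgt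
  linarith

lemma const_mul (hf : LimsupLE f x) {c : ℝ} (hc : 0 ≤ c) :
    LimsupLE (fun t => c * f t) (c * x) := by
  intro y hy
  rcases hc.eq_or_lt with rfl | hc
  · exact .of_forall fun _ => by simpa using hy.le
  · filter_upwards [hf (y / c) ((lt_div_iff₀' hc).2 hy)] with t ht
    exact (le_div_iff₀' hc).1 ht

lemma neg (hf : LimsupLE f x) : LiminfGE (fun t => -f t) (-x) :=
  fun y hy => (hf (-y) (by linarith)).mono fun _ ht => by linarith

lemma comp_monotoneOn {Φ : ℝ → ℝ} (hg : LimsupLE g x) (hg0 : ∀ᶠ t in atTop, 0 ≤ g t)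
    (hx : 0 ≤ x) (hmono : MonotoneOn Φ (Ici 0)) (hcont : ContinuousOn Φ (Ici 0)) :
    LimsupLE (fun t => Φ (g t)) (Φ x) := by
  intro z hz
  obtain ⟨δ, hδ, hΦ⟩ := Metric.continuousWithinAt_iff.1 (hcont x hx) _ (sub_pos.2 hz)
  filter_upwards [hg (x + δ / 2) (by linarith), hg0] with t hgt hgt0
  rcases le_total (g t) x with hgx | hxg
  · exact (hmono hgt0 hx hgx).trans hz.le
  · have hclose := hΦ hgt0 (by rw [Real.dist_eq, abs_of_nonneg (by linarith)]; linarith)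
    rw [Real.dist_eq] at hclose
    linarith [(abs_sub_lt_iff.1 hclose).1]

lemma comp_antitoneOn {Φ : ℝ → ℝ} (hg : LimsupLE g x) (hg0 : ∀ᶠ t in atTop, 0 ≤ g t)
    (hx : 0 ≤ x) (hanti : AntitoneOn Φ (Ici 0)) (hcont : ContinuousOn Φ (Ici 0)) :
    LiminfGE (fun t => Φ (g t)) (Φ x) := by
  simpa using (hg.comp_monotoneOn hg0 hx hanti.neg hcont.neg).neg

end LimsupLE

section ExtendedLimits

variable {f : ℝ → ℝ} {x : ℝ}

lemma liminfGE_toReal_eliminf (hf0 : ∀ t, 0 ≤ f t) (hfin : eliminf f ≠ ⊤) :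
    LiminfGE f (eliminf f).toReal := by
  intro y hy
  rcases lt_or_ge y 0 with hy0 | hy0
  · exact .of_forall fun t => hy0.le.trans (hf0 t)
  · have hlt : ENNReal.ofReal y < eliminf f := (ENNReal.ofReal_lt_iff_lt_toReal hy0 hfin).2 hy
    exact (eventually_lt_of_lt_liminf hlt).mono fun t ht =>
      (ENNReal.ofReal_lt_ofReal_iff'.1 ht).1.le

lemma limsupLE_toReal_elimsup (hfin : elimsup f ≠ ⊤) : LimsupLE f (elimsup f).toReal := by
  intro y hy
  have hlt : elimsup f < ENNReal.ofReal y := (ENNReal.lt_ofReal_iff_toReal_lt hfin).2 hy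
  exact (eventually_lt_of_limsup_lt hlt).mono fun t ht =>
    (ENNReal.ofReal_lt_ofReal_iff'.1 ht).1.le

lemma LiminfGE.ofReal_le_eliminf (h : LiminfGE f x) : ENNReal.ofReal x ≤ eliminf f := by
  refine le_of_forall_lt_imp_le_of_dense fun c hc => ?_
  have hc' : c.toReal < x := (ENNReal.lt_ofReal_iff_toReal_lt hc.ne_top).1 hc
  refine le_liminf_of_le (by isBoundedDefault) ((h _ hc').mono fun t ht => ?_)
  rw [← ENNReal.ofReal_toReal hc.ne_top]
  exact ENNReal.ofReal_le_ofReal ht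

lemma LiminfGE.le_toReal_eliminf (h : LiminfGE f x) (hfin : eliminf f ≠ ⊤) :
    x ≤ (eliminf f).toReal :=
  (ENNReal.ofReal_le_iff_le_toReal hfin).1 h.ofReal_le_eliminf

lemma LimsupLE.toReal_elimsup_le (h : LimsupLE f x) (hf0 : ∀ t, 0 ≤ f t) :
    (elimsup f).toReal ≤ x := by
  refine le_of_forall_gt_imp_ge_of_dense fun y hy => ?_
  have hy0 : 0 ≤ y := let ⟨t, ht⟩ := (h y hy).exists; (hf0 t).trans ht
  exact ENNReal.toReal_le_of_le_ofReal hy0 <| limsup_le_of_le (by isBoundedDefault) <|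
    (h y hy).mono fun _ ht => ENNReal.ofReal_le_ofReal ht

lemma eliminf_eq_top_of_tendsto (hf : Tendsto f atTop atTop) : eliminf f = ⊤ :=
  (ENNReal.tendsto_ofReal_atTop.comp hf).liminf_eq

lemma tendsto_atTop_of_eliminf_eq_top (h : eliminf f = ⊤) : Tendsto f atTop atTop := by
  refine tendsto_atTop.2 fun b => ?_
  have hlt : ENNReal.ofReal b < eliminf f := h ▸ ENNReal.ofReal_lt_top
  exact (eventually_lt_of_lt_liminf hlt).mono fun t ht =>
    (ENNReal.ofReal_lt_ofReal_iff'.1 ht).1.le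

end ExtendedLimits

lemma continuousOn_Ici_of_abs_sub_le {Φ : ℝ → ℝ} {K : ℝ}
    (h : ∀ x y, 0 ≤ x → 0 ≤ y → |Φ x - Φ y| ≤ K * |x - y|) : ContinuousOn Φ (Ici 0) :=
  (LipschitzOnWith.of_dist_le' fun x hx y hy => by
    simpa only [Real.dist_eq] using h x y hx hy).continuousOn

lemma InhibOK.continuousOn {Φ : ℝ → ℝ} (hΦ : InhibOK Φ) : ContinuousOn Φ (Ici 0) :=
  let ⟨_, _, hK⟩ := hΦ.1
  continuousOn_Ici_of_abs_sub_le hK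

lemma FeedOK.continuousOn {Φ : ℝ → ℝ} (hΦ : FeedOK Φ) : ContinuousOn Φ (Ici 0) :=
  let ⟨_, _, hK⟩ := hΦ.1
  continuousOn_Ici_of_abs_sub_le hK
namespace KernelL1

variable {h f : ℝ → ℝ}

lemma l1_nonneg (hK : KernelL1 h) : 0 ≤ l1 h :=
  setIntegral_nonneg measurableSet_Ioi fun x hx => hK.2.1 x (le_of_lt hx)

lemma intervalIntegrable (hK : KernelL1 h) {a b : ℝ} (ha : 0 ≤ a) (hab : a ≤ b) :
    IntervalIntegrable h volume a b := by
  rw [intervalIntegrable_iff_integrableOn_Ioc_of_le hab]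
  exact hK.2.2.mono_set fun x hx => ha.trans_lt hx.1

lemma intervalIntegrable_mul (hK : KernelL1 h) (hf : Continuous f) {t a b : ℝ} (hab : a ≤ b)
    (hbt : b ≤ t) :
    IntervalIntegrable (fun u => h (t - u) * f u) volume a b := by
  have hh := (hK.intervalIntegrable (sub_nonneg.2 hbt) (sub_le_sub_left hab t)).comp_sub_left t
  simp only [sub_sub_cancel] at hh
  exact hh.symm.mul_continuousOn hf.continuousOn

lemma tendsto_integral_sub (hK : KernelL1 h) (T : ℝ) :
    Tendsto (fun t => ∫ s in (0:ℝ)..(t - T), h s) atTop (𝓝 (l1 h)) :=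
  intervalIntegral_tendsto_integral_Ioi 0 hK.2.2
    (tendsto_atTop_atTop.2 fun b => ⟨b + T, fun _ ht => by linarith⟩)

lemma tendsto_integral_sub_self (hK : KernelL1 h) (T : ℝ) :
    Tendsto (fun t => ∫ s in (t - T)..t, h s) atTop (𝓝 0) := by
  have hlim := (by simpa using hK.tendsto_integral_sub 0 : Tendsto (fun t => ∫ s in (0:ℝ)..t, h s)
    atTop (𝓝 (l1 h))).sub (hK.tendsto_integral_sub T)
  rw [sub_self] at hlim
  refine hlim.congr' ?_
  filter_upwards [eventually_ge_atTop T, eventually_ge_atTop 0] with t hT ht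
  exact intervalIntegral.integral_interval_sub_left (hK.intervalIntegrable le_rfl ht)
    (hK.intervalIntegrable le_rfl (sub_nonneg.2 hT))

lemma convK_nonneg (hK : KernelL1 h) (hf0 : ∀ u, 0 ≤ f u) {t : ℝ} (ht : 0 ≤ t) :
    0 ≤ convK h f t :=
  intervalIntegral.integral_nonneg ht fun u hu =>
    mul_nonneg (hK.2.1 _ (sub_nonneg.2 hu.2)) (hf0 u)

lemma eventually_mul_convK_nonneg (hK : KernelL1 h) (hf0 : ∀ u, 0 ≤ f u) {c : ℝ}
    (hc : 0 ≤ c) : ∀ᶠ t in atTop, 0 ≤ c * convK h f t :=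
  (eventually_ge_atTop 0).mono fun _ ht => mul_nonneg hc (hK.convK_nonneg hf0 ht)

lemma mul_integral_le_convK (hK : KernelL1 h) (hf : Continuous f) (hf0 : ∀ u, 0 ≤ f u)
    {c T t : ℝ} (hT : 0 ≤ T) (hcf : ∀ u ∈ Ici T, c ≤ f u) (hTt : T ≤ t) :
    c * ∫ s in (0:ℝ)..(t - T), h s ≤ convK h f t := by
  have hhead : 0 ≤ ∫ u in (0:ℝ)..T, h (t - u) * f u :=
    intervalIntegral.integral_nonneg hT fun u hu =>
      mul_nonneg (hK.2.1 _ (by linarith [hu.2])) (hf0 u)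
  have htail : ∫ u in T..t, h (t - u) * c ≤ ∫ u in T..t, h (t - u) * f u :=
    intervalIntegral.integral_mono_on hTt
      (hK.intervalIntegrable_mul (f := fun _ => c) continuous_const hTt le_rfl)
      (hK.intervalIntegrable_mul hf hTt le_rfl) fun u hu =>
        mul_le_mul_of_nonneg_left (hcf u hu.1) (hK.2.1 _ (sub_nonneg.2 hu.2))
  rw [intervalIntegral.integral_mul_const, intervalIntegral.integral_comp_sub_left, sub_self,
    mul_comm] at htail
  rw [convK, ← intervalIntegral.integral_add_adjacent_intervals
    (hK.intervalIntegrable_mul hf hT hTt) (hK.intervalIntegrable_mul hf hTt le_rfl)]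
  linarith

lemma convK_le (hK : KernelL1 h) (hf : Continuous f) {c M T t : ℝ} (hT : 0 ≤ T)
    (hM : ∀ u ∈ Icc 0 T, f u ≤ M) (hcf : ∀ u ∈ Ici T, f u ≤ c) (hTt : T ≤ t) :
    convK h f t ≤ M * (∫ s in (t - T)..t, h s) + c * ∫ s in (0:ℝ)..(t - T), h s := by
  have hhead : ∫ u in (0:ℝ)..T, h (t - u) * f u ≤ ∫ u in (0:ℝ)..T, h (t - u) * M :=
    intervalIntegral.integral_mono_on hT (hK.intervalIntegrable_mul hf hT hTt)
      (hK.intervalIntegrable_mul (f := fun _ => M) continuous_const hT hTt) fun u hu =>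
        mul_le_mul_of_nonneg_left (hM u hu) (hK.2.1 _ (by linarith [hu.2]))
  have htail : ∫ u in T..t, h (t - u) * f u ≤ ∫ u in T..t, h (t - u) * c :=
    intervalIntegral.integral_mono_on hTt (hK.intervalIntegrable_mul hf hTt le_rfl)
      (hK.intervalIntegrable_mul (f := fun _ => c) continuous_const hTt le_rfl) fun u hu =>
        mul_le_mul_of_nonneg_left (hcf u hu.1) (hK.2.1 _ (sub_nonneg.2 hu.2))
  rw [intervalIntegral.integral_mul_const, intervalIntegral.integral_comp_sub_left, sub_zero,
    mul_comm] at hhead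
  rw [intervalIntegral.integral_mul_const, intervalIntegral.integral_comp_sub_left, sub_self,
    mul_comm] at htail
  rw [convK, ← intervalIntegral.integral_add_adjacent_intervals
    (hK.intervalIntegrable_mul hf hT hTt) (hK.intervalIntegrable_mul hf hTt le_rfl)]
  exact add_le_add hhead htail

end KernelL1

section Convolution

variable {h f : ℝ → ℝ} {x : ℝ}

lemma LiminfGE.conv (hfx : LiminfGE f x) (hK : KernelL1 h) (hf : Continuous f)
    (hf0 : ∀ u, 0 ≤ f u) : LiminfGE (convK h f) (l1 h * x) := by
  intro y hy
  obtain ⟨c, hyc, hcx⟩ : ∃ c, y < l1 h * c ∧ c < x :=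
    ((((continuous_const_mul (l1 h)).tendsto x).eventually (lt_mem_nhds hy)).filter_mono
      nhdsWithin_le_nhds |>.and (self_mem_nhdsWithin : Iio x ∈ 𝓝[<] x)).exists
  obtain ⟨T, hT, hcf⟩ := (atTop_basis' 0).eventually_iff.1 (hfx c hcx)
  have hlim := (hK.tendsto_integral_sub T).const_mul c
  filter_upwards [hlim.eventually (eventually_ge_nhds (show y < c * l1 h by linarith)),
    eventually_ge_atTop T] with t hyt hTt
  exact hyt.trans (hK.mul_integral_le_convK hf hf0 hT hcf hTt)

lemma LimsupLE.conv (hfx : LimsupLE f x) (hK : KernelL1 h) (hf : Continuous f) :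
    LimsupLE (convK h f) (l1 h * x) := by
  intro y hy
  obtain ⟨c, hyc, hcx⟩ : ∃ c, l1 h * c < y ∧ x < c :=
    ((((continuous_const_mul (l1 h)).tendsto x).eventually (gt_mem_nhds hy)).filter_mono
      nhdsWithin_le_nhds |>.and (self_mem_nhdsWithin : Ioi x ∈ 𝓝[>] x)).exists
  obtain ⟨T, hT, hcf⟩ := (atTop_basis' 0).eventually_iff.1 (hfx c hcx)
  obtain ⟨M, hM⟩ := isCompact_Icc.exists_bound_of_continuousOn (hf.continuousOn (s := Icc 0 T))
  have hlim := ((hK.tendsto_integral_sub_self T).const_mul M).add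
    ((hK.tendsto_integral_sub T).const_mul c)
  rw [mul_zero, zero_add] at hlim
  filter_upwards [hlim.eventually (eventually_le_nhds (show c * l1 h < y by linarith)),
    eventually_ge_atTop T] with t hyt hTt
  exact (hK.convK_le hf hT (fun u hu => (le_abs_self _).trans (hM u hu)) hcf hTt).trans hyt

lemma LiminfGE.const_mul_conv (hfx : LiminfGE f x) (hK : KernelL1 h) (hf : Continuous f)
    (hf0 : ∀ u, 0 ≤ f u) {c : ℝ} (hc : 0 ≤ c) :
    LiminfGE (fun t => c * convK h f t) (c * l1 h * x) :=
  mul_assoc c (l1 h) x ▸ (hfx.conv hK hf hf0).const_mul hc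

lemma LimsupLE.const_mul_conv (hfx : LimsupLE f x) (hK : KernelL1 h) (hf : Continuous f)
    {c : ℝ} (hc : 0 ≤ c) : LimsupLE (fun t => c * convK h f t) (c * l1 h * x) :=
  mul_assoc c (l1 h) x ▸ (hfx.conv hK hf).const_mul hc

lemma KernelL1.tendsto_convK_atTop (hK : KernelL1 h) (hl1 : 0 < l1 h) (hf : Continuous f)
    (hf0 : ∀ u, 0 ≤ f u) (hft : Tendsto f atTop atTop) :
    Tendsto (convK h f) atTop atTop := by
  refine tendsto_atTop.2 fun b => ?_
  have hconv := (LiminfGE.of_eventually_le (hft.eventually_ge_atTop (b / l1 h + 1))).conv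
    hK hf hf0
  exact hconv b (by rw [mul_add, mul_div_cancel₀ _ hl1.ne']; linarith)

end Convolution

section MeanField

variable {α : ℝ} {h₁ h₂ h₃ h₄ ΦA ΦB ΦBA ΦAB lA lB : ℝ → ℝ} {μA μB : ℝ}

lemma IsGenSys.feedback_le (hsys : IsGenSys α h₁ h₂ h₃ h₄ ΦA ΦB ΦBA ΦAB lA lB) (hα₁ : α ≤ 1)
    (hh₃ : KernelL1 h₃) (hΦB : ∀ x, 0 ≤ x → 0 ≤ ΦB x) :
    ∀ᶠ t in atTop, ΦAB (α * convK h₄ lA t) ≤ lB t := by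
  obtain ⟨-, -, -, hB0, -, hB⟩ := hsys
  filter_upwards [hh₃.eventually_mul_convK_nonneg hB0 (sub_nonneg.2 hα₁),
    eventually_ge_atTop 0] with t h3 ht
  rw [hB t ht]
  linarith [hΦB _ h3]

lemma IsGenSys.ofReal_le_eliminf (hsys : IsGenSys α h₁ h₂ h₃ h₄ ΦA ΦB ΦBA ΦAB lA lB)
    (hα₀ : 0 ≤ α) (hα₁ : α ≤ 1) (hh₃ : KernelL1 h₃) (hh₄ : KernelL1 h₄)
    (hΦB : ∀ x, 0 ≤ x → 0 ≤ ΦB x) (hmono : MonotoneOn ΦAB (Ici 0))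
    (hcont : ContinuousOn ΦAB (Ici 0)) (hfinA : eliminf lA ≠ ⊤) :
    ENNReal.ofReal (ΦAB (α * l1 h₄ * (eliminf lA).toReal)) ≤ eliminf lB := by
  have hfb := hsys.feedback_le hα₁ hh₃ hΦB
  obtain ⟨hcA, -, hA0, -⟩ := hsys
  have h4 := ((liminfGE_toReal_eliminf hA0 hfinA).const_mul_conv hh₄ hcA hA0 hα₀).comp_monotoneOn
    (hh₄.eventually_mul_convK_nonneg hA0 hα₀)
    (mul_nonneg (mul_nonneg hα₀ hh₄.l1_nonneg) ENNReal.toReal_nonneg) hmono hcont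
  exact (h4.mono hfb).ofReal_le_eliminf

lemma IsGenSys.eliminf_eq_top (hsys : IsGenSys α h₁ h₂ h₃ h₄ ΦA ΦB ΦBA ΦAB lA lB)
    (hα₀ : 0 < α) (hα₁ : α ≤ 1) (hh₃ : KernelL1 h₃) (hh₄ : KernelL1 h₄) (hl1 : 0 < l1 h₄)
    (hΦB : ∀ x, 0 ≤ x → 0 ≤ ΦB x) (hΦAB : Tendsto ΦAB atTop atTop) (hA : eliminf lA = ⊤) :
    eliminf lB = ⊤ := by
  have hfb := hsys.feedback_le hα₁ hh₃ hΦB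
  obtain ⟨hcA, -, hA0, -⟩ := hsys
  have h4 : Tendsto (fun t => α * convK h₄ lA t) atTop atTop :=
    (hh₄.tendsto_convK_atTop hl1 hcA hA0 (tendsto_atTop_of_eliminf_eq_top hA)).const_mul_atTop hα₀
  exact eliminf_eq_top_of_tendsto
    (tendsto_atTop_mono' _ hfb (hΦAB.comp h4))

lemma IsGenSys.toReal_elimsup_le (hsys : IsGenSys α h₁ h₂ h₃ h₄ ΦA ΦB ΦBA ΦAB lA lB)
    (hα₀ : 0 ≤ α) (hα₁ : α ≤ 1) (hh₃ : KernelL1 h₃) (hh₄ : KernelL1 h₄) {LB : ℝ}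
    (hLB : 0 ≤ LB) (hΦBlip : ∀ x y, 0 ≤ x → 0 ≤ y → |ΦB x - ΦB y| ≤ LB * |x - y|)
    (hmono : MonotoneOn ΦAB (Ici 0)) (hcont : ContinuousOn ΦAB (Ici 0))
    (hfinA : elimsup lA ≠ ⊤) (hfinB : elimsup lB ≠ ⊤) :
    (elimsup lB).toReal ≤
      ΦB 0 + LB * ((1 - α) * l1 h₃) * (elimsup lB).toReal +
        ΦAB (α * l1 h₄ * (elimsup lA).toReal) := by
  obtain ⟨hcA, hcB, hA0, hB0, -, hB⟩ := hsys
  have h3 := (limsupLE_toReal_elimsup hfinB).const_mul_conv hh₃ hcB (sub_nonneg.2 hα₁)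
  have h4 := ((limsupLE_toReal_elimsup hfinA).const_mul_conv hh₄ hcA hα₀).comp_monotoneOn
    (hh₄.eventually_mul_convK_nonneg hA0 hα₀)
    (mul_nonneg (mul_nonneg hα₀ hh₄.l1_nonneg) ENNReal.toReal_nonneg) hmono hcont
  have hsum := ((LimsupLE.const (ΦB 0)).add (h3.const_mul hLB)).add h4
  refine ((hsum.mono ?_).toReal_elimsup_le hB0).trans_eq (by ring)
  filter_upwards [hh₃.eventually_mul_convK_nonneg hB0 (sub_nonneg.2 hα₁),
    eventually_ge_atTop 0] with t h3 ht
  have hlip := (abs_le.1 (hΦBlip _ 0 h3 le_rfl)).2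
  rw [sub_zero, abs_of_nonneg h3] at hlip
  rw [hB t ht]
  linarith

lemma IsLinSys.le_toReal_eliminf_B (hsys : IsLinSys α h₁ h₂ h₃ h₄ ΦBA ΦAB μA μB lA lB)
    (hα₀ : 0 ≤ α) (hα₁ : α ≤ 1) (hh₃ : KernelL1 h₃) (hh₄ : KernelL1 h₄)
    (hmono : MonotoneOn ΦAB (Ici 0)) (hcont : ContinuousOn ΦAB (Ici 0))
    (hfinA : eliminf lA ≠ ⊤) (hfinB : eliminf lB ≠ ⊤) :
    μB + (1 - α) * l1 h₃ * (eliminf lB).toReal + ΦAB (α * l1 h₄ * (eliminf lA).toReal) ≤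
      (eliminf lB).toReal := by
  obtain ⟨hcA, hcB, hA0, hB0, -, hB⟩ := hsys
  have h3 := (liminfGE_toReal_eliminf hB0 hfinB).const_mul_conv hh₃ hcB hB0 (sub_nonneg.2 hα₁)
  have h4 := ((liminfGE_toReal_eliminf hA0 hfinA).const_mul_conv hh₄ hcA hA0 hα₀).comp_monotoneOn
    (hh₄.eventually_mul_convK_nonneg hA0 hα₀)
    (mul_nonneg (mul_nonneg hα₀ hh₄.l1_nonneg) ENNReal.toReal_nonneg) hmono hcont
  refine ((((LiminfGE.const μB).add h3).add h4).mono ?_).le_toReal_eliminf hfinB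
  filter_upwards [eventually_ge_atTop 0] with t ht
  exact (hB t ht).ge

lemma IsLinSys.le_toReal_eliminf_A (hsys : IsLinSys α h₁ h₂ h₃ h₄ ΦBA ΦAB μA μB lA lB)
    (hα₀ : 0 ≤ α) (hα₁ : α ≤ 1) (hh₁ : KernelL1 h₁) (hh₂ : KernelL1 h₂) (hμA : 0 ≤ μA)
    (hanti : AntitoneOn ΦBA (Ici 0)) (hcont : ContinuousOn ΦBA (Ici 0))
    (hΦBA : ∀ x, 0 ≤ x → 0 ≤ ΦBA x) (hfinB : elimsup lB ≠ ⊤) (hfinA : eliminf lA ≠ ⊤) :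
    (μA + α * l1 h₁ * (eliminf lA).toReal) * ΦBA ((1 - α) * l1 h₂ * (elimsup lB).toReal) ≤
      (eliminf lA).toReal := by
  obtain ⟨hcA, hcB, hA0, hB0, hA, -⟩ := hsys
  have h1 := (LiminfGE.const μA).add
    ((liminfGE_toReal_eliminf hA0 hfinA).const_mul_conv hh₁ hcA hA0 hα₀)
  have hκ₂b : 0 ≤ (1 - α) * l1 h₂ * (elimsup lB).toReal :=
    mul_nonneg (mul_nonneg (sub_nonneg.2 hα₁) hh₂.l1_nonneg) ENNReal.toReal_nonneg
  have h2 := ((limsupLE_toReal_elimsup hfinB).const_mul_conv hh₂ hcB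
    (sub_nonneg.2 hα₁)).comp_antitoneOn (hh₂.eventually_mul_convK_nonneg hB0 (sub_nonneg.2 hα₁))
    hκ₂b hanti hcont
  refine ((h1.mul h2 ?_ ?_ (hΦBA _ hκ₂b)).mono ?_).le_toReal_eliminf hfinA
  · filter_upwards [hh₁.eventually_mul_convK_nonneg hA0 hα₀] with t ht
    linarith
  · filter_upwards [hh₂.eventually_mul_convK_nonneg hB0 (sub_nonneg.2 hα₁)] with t ht
    exact hΦBA _ ht
  · filter_upwards [eventually_ge_atTop 0] with t ht
    exact (hA t ht).ge

end MeanField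

theorem stmt12_general
    (α : ℝ) (hα : α ∈ Set.Ioo (0:ℝ) 1)
    (h₁ h₂ h₃ h₄ : ℝ → ℝ)
    (hh₁ : KernelOK h₁) (hh₂ : KernelOK h₂) (hh₃ : KernelOK h₃) (hh₄ : KernelOK h₄)
    (κ₁ κ₂ κ₃ κ₄ : ℝ)
    (hκ₁ : κ₁ = α * l1 h₁) (hκ₂ : κ₂ = (1 - α) * l1 h₂)
    (hκ₃ : κ₃ = (1 - α) * l1 h₃) (hκ₄ : κ₄ = α * l1 h₄)
    (ΦBA ΦAB : ℝ → ℝ) (hBA : InhibOK ΦBA) (hAB : FeedOK ΦAB)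
    (ΦA ΦB : ℝ → ℝ) (LB : ℝ) (hLB : 0 ≤ LB)
    (hΦBpos : ∀ x, 0 ≤ x → 0 ≤ ΦB x)
    (hΦBlip : ∀ x y, 0 ≤ x → 0 ≤ y → |ΦB x - ΦB y| ≤ LB * |x - y|)
    (μA μB : ℝ) (hμA : 0 ≤ μA) :
    (∀ lA lB, IsGenSys α h₁ h₂ h₃ h₄ ΦA ΦB ΦBA ΦAB lA lB →
      (eliminf lA < ⊤ →
        ENNReal.ofReal (ΦAB (κ₄ * (eliminf lA).toReal)) ≤ eliminf lB) ∧
      (eliminf lA = ⊤ → 0 < κ₄ → eliminf lB = ⊤) ∧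
      (elimsup lA < ⊤ → elimsup lB < ⊤ →
        (elimsup lB).toReal ≤
          ΦB 0 + LB * κ₃ * (elimsup lB).toReal +
            ΦAB (κ₄ * (elimsup lA).toReal))) ∧
    (∀ lA lB, IsLinSys α h₁ h₂ h₃ h₄ ΦBA ΦAB μA μB lA lB →
      (eliminf lA < ⊤ → eliminf lB < ⊤ →
        μB + κ₃ * (eliminf lB).toReal + ΦAB (κ₄ * (eliminf lA).toReal) ≤
          (eliminf lB).toReal) ∧
      (elimsup lB < ⊤ → eliminf lA < ⊤ →
        (μA + κ₁ * (eliminf lA).toReal) * ΦBA (κ₂ * (elimsup lB).toReal) ≤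
          (eliminf lA).toReal)) := by
  obtain ⟨hα₀, hα₁⟩ := hα
  have hcontBA := hBA.continuousOn
  have hcontAB := hAB.continuousOn
  obtain ⟨-, hanti, -, hBA01, -⟩ := hBA
  obtain ⟨-, hmono, -, -, hABtop⟩ := hAB
  subst hκ₁ hκ₂ hκ₃ hκ₄
  refine ⟨fun lA lB hsys => ⟨fun hA => ?_, fun hA hκ₄ => ?_, fun hA hB => ?_⟩,
    fun lA lB hsys => ⟨fun hA hB => ?_, fun hB hA => ?_⟩⟩
  · exact hsys.ofReal_le_eliminf hα₀.le hα₁.le hh₃.1 hh₄.1 hΦBpos hmono hcontAB hA.ne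
  · exact hsys.eliminf_eq_top hα₀ hα₁.le hh₃.1 hh₄.1 (pos_of_mul_pos_right hκ₄ hα₀.le) hΦBpos
      hABtop hA
  · exact hsys.toReal_elimsup_le hα₀.le hα₁.le hh₃.1 hh₄.1 hLB hΦBlip hmono hcontAB hA.ne hB.ne
  · exact hsys.le_toReal_eliminf_B hα₀.le hα₁.le hh₃.1 hh₄.1 hmono hcontAB hA.ne hB.ne
  · exact hsys.le_toReal_eliminf_A hα₀.le hα₁.le hh₁.1 hh₂.1 hμA hanti hcontBA
      (fun x hx => (hBA01 x hx).1) hB.ne hA.ne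

/-- A priori inequalities on the liminf/limsup of the intensities, for the
general and the linear mean-field systems. -/
theorem stmt12
    (α : ℝ) (hα : α ∈ Set.Ioo (0:ℝ) 1)
    (h₁ h₂ h₃ h₄ : ℝ → ℝ)
    (hh₁ : KernelOK h₁) (hh₂ : KernelOK h₂) (hh₃ : KernelOK h₃) (hh₄ : KernelOK h₄)
    (κ₁ κ₂ κ₃ κ₄ : ℝ)
    (hκ₁ : κ₁ = α * l1 h₁) (hκ₂ : κ₂ = (1 - α) * l1 h₂)
    (hκ₃ : κ₃ = (1 - α) * l1 h₃) (hκ₄ : κ₄ = α * l1 h₄)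
    (ΦBA ΦAB : ℝ → ℝ) (hBA : InhibOK ΦBA) (hAB : FeedOK ΦAB)
    (ΦA ΦB : ℝ → ℝ) (LA LB : ℝ) (hLA : 0 ≤ LA) (hLB : 0 ≤ LB)
    (hΦApos : ∀ x, 0 ≤ x → 0 ≤ ΦA x) (hΦBpos : ∀ x, 0 ≤ x → 0 ≤ ΦB x)
    (hΦAlip : ∀ x y, 0 ≤ x → 0 ≤ y → |ΦA x - ΦA y| ≤ LA * |x - y|)
    (hΦBlip : ∀ x y, 0 ≤ x → 0 ≤ y → |ΦB x - ΦB y| ≤ LB * |x - y|)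
    (μA μB : ℝ) (hμA : 0 ≤ μA) (hμB : 0 ≤ μB) :
    (∀ lA lB, IsGenSys α h₁ h₂ h₃ h₄ ΦA ΦB ΦBA ΦAB lA lB →
      (eliminf lA < ⊤ →
        ENNReal.ofReal (ΦAB (κ₄ * (eliminf lA).toReal)) ≤ eliminf lB) ∧
      (eliminf lA = ⊤ → 0 < κ₄ → eliminf lB = ⊤) ∧
      (elimsup lA < ⊤ → elimsup lB < ⊤ →
        (elimsup lB).toReal ≤
          ΦB 0 + LB * κ₃ * (elimsup lB).toReal +
            ΦAB (κ₄ * (elimsup lA).toReal))) ∧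
    (∀ lA lB, IsLinSys α h₁ h₂ h₃ h₄ ΦBA ΦAB μA μB lA lB →
      (eliminf lA < ⊤ → eliminf lB < ⊤ →
        μB + κ₃ * (eliminf lB).toReal + ΦAB (κ₄ * (eliminf lA).toReal) ≤
          (eliminf lB).toReal) ∧
      (elimsup lB < ⊤ → eliminf lA < ⊤ →
        (μA + κ₁ * (eliminf lA).toReal) * ΦBA (κ₂ * (elimsup lB).toReal) ≤
          (eliminf lA).toReal)) :=
  stmt12_general α hα h₁ h₂ h₃ h₄ hh₁ hh₂ hh₃ hh₄ κ₁ κ₂ κ₃ κ₄ hκ₁ hκ₂ hκ₃ hκ₄ ΦBA ΦAB hBA hAB ΦA ΦB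
    LB hLB hΦBpos hΦBlip μA μB hμA
end

section
/- Consider the linear mean-field system with polynomial inhibition Φ_{B→A}(x) = 1/(1 + τx^β) and Φ_{A→B}(x) = x, where τ > 0 and β ∈ (0,1]. Suppose κ₃ < 1, κ₂ > 0, κ₄ > 0, μ_A > 0 and κ₁ < 1 + τa^β, where a = μ_B κ₂/(1−κ₃). Then λ^B(t) → ℓ and λ^A(t) → μ_A/(1 − κ₁ + τ(κ₂ℓ)^β) as t → ∞, where ℓ is the unique fixed point on [μ_B/(1−κ₃), ∞) of the map Φ(x) = a/κ₂ + μ_A b/(κ₂(1 − κ₁ + τ(κ₂x)^β)) with b = κ₂κ₄/(1−κ₃). -/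
open MeasureTheory Filter Topology Set
open scoped ENNReal

set_option linter.unusedSectionVars false
set_option linter.unusedVariables false
set_option maxHeartbeats 1000000
section Kern
variable {h f : ℝ → ℝ}
  (hm : Measurable h) (hpos : ∀ u, 0 ≤ u → 0 ≤ h u) (hint : IntegrableOn h (Set.Ioi 0))
  (hfc : Continuous f) (hf0 : ∀ u, 0 ≤ f u)

include hpos hint in
lemma l1_nonneg : 0 ≤ l1 h :=
  setIntegral_nonneg measurableSet_Ioi (fun x hx => hpos x (le_of_lt hx))

include hint in
lemma kern_ii {a b : ℝ} (ha : 0 ≤ a) (hab : a ≤ b) : IntervalIntegrable h volume a b := by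
  rw [intervalIntegrable_iff_integrableOn_Ioc_of_le hab]
  exact hint.mono_set (fun x hx => lt_of_le_of_lt ha hx.1)

include hint in
lemma kern_refl_ii {t a b : ℝ} (hb : b ≤ t) (hab : a ≤ b) : IntervalIntegrable (fun u => h (t - u)) volume a b := by
  have h1 : IntervalIntegrable h volume (t - b) (t - a) := kern_ii hint (by linarith) (by linarith)
  have h2 := h1.comp_sub_left t
  simpa using h2.symm

/-- `∫ a..b, h (t-u) du = ∫ (t-b)..(t-a), h`. -/
lemma kern_refl_int {t a b : ℝ} : (∫ u in a..b, h (t - u)) = ∫ s in (t-b)..(t-a), h s :=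
  intervalIntegral.integral_comp_sub_left h t

include hm hpos hint hfc in
lemma conv_ii {t a b : ℝ} (hb : b ≤ t) (hab : a ≤ b) (ha : 0 ≤ a) :
    IntervalIntegrable (fun u => h (t - u) * f u) volume a b := by
  obtain ⟨M, hM⟩ := isCompact_Icc.exists_bound_of_continuousOn (s := Icc a b) hfc.continuousOn
  have hk : IntegrableOn (fun u => h (t-u)) (Set.Ioc a b) := by
    have := kern_refl_ii (h := h) hint hb hab
    rwa [intervalIntegrable_iff_integrableOn_Ioc_of_le hab] at this
  rw [intervalIntegrable_iff_integrableOn_Ioc_of_le hab]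
  apply Integrable.mono' (hk.const_mul M)
  · exact ((hm.comp (measurable_const.sub measurable_id)).mul hfc.measurable).aestronglyMeasurable
  · refine (ae_restrict_iff' measurableSet_Ioc).2 (MeasureTheory.ae_of_all _ fun u hu => ?_)
    have h0 : 0 ≤ h (t - u) := hpos _ (by linarith [hu.2])
    have : ‖h (t - u) * f u‖ = h (t-u) * |f u| := by
      rw [norm_mul, Real.norm_eq_abs, Real.norm_eq_abs, abs_of_nonneg h0]
    rw [this]
    calc h (t-u) * |f u| ≤ h (t-u) * M := by
          apply mul_le_mul_of_nonneg_left _ h0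
          simpa [Real.norm_eq_abs] using hM u ⟨le_of_lt hu.1, hu.2⟩
      _ = M * h (t-u) := mul_comm _ _

include hm hpos hint hfc hf0 in
lemma convK_nonneg {t : ℝ} (ht : 0 ≤ t) : 0 ≤ convK h f t := by
  apply intervalIntegral.integral_nonneg ht
  intro u hu
  exact mul_nonneg (hpos _ (by linarith [hu.2])) (hf0 u)

include hpos hint in
lemma int_le_l1 {y : ℝ} (hy : 0 ≤ y) : (∫ s in (0:ℝ)..y, h s) ≤ l1 h := by
  rw [intervalIntegral.integral_of_le hy]
  apply setIntegral_mono_set hint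
  · exact (MeasureTheory.ae_restrict_iff' measurableSet_Ioi).2
      (MeasureTheory.ae_of_all _ fun x hx => hpos x (le_of_lt hx))
  · exact HasSubset.Subset.eventuallyLE Ioc_subset_Ioi_self

include hm hpos hint hfc hf0 in
lemma convK_le_of_le {t M : ℝ} (ht : 0 ≤ t) (hM0 : 0 ≤ M) (hM : ∀ u ∈ Icc 0 t, f u ≤ M) :
    convK h f t ≤ M * l1 h := by
  have step1 : convK h f t ≤ ∫ u in (0:ℝ)..t, M * h (t - u) := by
    apply intervalIntegral.integral_mono_on ht (conv_ii hm hpos hint hfc le_rfl ht le_rfl)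
      ((kern_refl_ii hint le_rfl ht).const_mul M)
    intro u hu
    have h0 : 0 ≤ h (t - u) := hpos _ (by linarith [hu.2])
    calc h (t-u) * f u ≤ h (t-u) * M := mul_le_mul_of_nonneg_left (hM u hu) h0
      _ = M * h (t-u) := mul_comm _ _
  have step2 : (∫ u in (0:ℝ)..t, M * h (t - u)) = M * ∫ s in (0:ℝ)..t, h s := by
    rw [intervalIntegral.integral_const_mul, kern_refl_int]
    simp
  calc convK h f t ≤ M * ∫ s in (0:ℝ)..t, h s := by rw [← step2]; exact step1
    _ ≤ M * l1 h := mul_le_mul_of_nonneg_left (int_le_l1 hpos hint ht) hM0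

include hpos hint in
lemma tail_tendsto : Tendsto (fun x : ℝ => ∫ s in Set.Ioi x, h s) atTop (𝓝 0) := by
  have h1 : Tendsto (fun b : ℝ => ∫ s in (0:ℝ)..b, h s) atTop (𝓝 (l1 h)) :=
    intervalIntegral_tendsto_integral_Ioi 0 hint tendsto_id
  have h2 : (fun x : ℝ => ∫ s in Set.Ioi x, h s) =ᶠ[atTop] (fun x => l1 h - ∫ s in (0:ℝ)..x, h s) := by
    filter_upwards [eventually_ge_atTop (0:ℝ)] with x hx
    have hsplit : (∫ s in Set.Ioc 0 x, h s) + (∫ s in Set.Ioi x, h s) = l1 h := by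
      rw [← MeasureTheory.setIntegral_union (Set.Ioc_disjoint_Ioi le_rfl) measurableSet_Ioi
        (hint.mono_set (fun y hy => lt_of_le_of_lt (le_refl 0) (lt_of_le_of_lt (le_refl 0) hy.1)))
        (hint.mono_set (fun y hy => lt_of_le_of_lt hx hy)), Set.Ioc_union_Ioi_eq_Ioi hx]
      rfl
    rw [intervalIntegral.integral_of_le hx]
    linarith
  rw [tendsto_congr' h2]
  have := h1.const_sub (l1 h)
  simpa using this
end Kern

lemma mul_div_self_add_le {M ε : ℝ} (hM0 : 0 ≤ M) (hε : 0 ≤ ε) : M * (ε/(M+1)) ≤ ε := by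
  have h1 : M / (M+1) ≤ 1 := (div_le_one (by linarith)).2 (by linarith)
  calc M * (ε/(M+1)) = (M/(M+1)) * ε := by ring
    _ ≤ 1 * ε := mul_le_mul_of_nonneg_right h1 hε
    _ = ε := one_mul ε

section Kern2
variable {h f : ℝ → ℝ}
  (hm : Measurable h) (hpos : ∀ u, 0 ≤ u → 0 ≤ h u) (hint : IntegrableOn h (Set.Ioi 0))
  (hfc : Continuous f) (hf0 : ∀ u, 0 ≤ f u)

include hm hpos hint hfc hf0 in
lemma conv_ev_le {M U T₁ ε : ℝ} (hM : ∀ u, 0 ≤ u → f u ≤ M) (hU0 : 0 ≤ U) (hT₁ : 0 ≤ T₁)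
    (hUT : ∀ u, T₁ ≤ u → f u ≤ U) (hε : 0 < ε) :
    ∀ᶠ t in atTop, convK h f t ≤ U * l1 h + ε := by
  have hM0 : 0 ≤ M := le_trans (hf0 0) (hM 0 le_rfl)
  have hδ : (0:ℝ) < ε / (M + 1) := by positivity
  obtain ⟨S, hS⟩ := eventually_atTop.1
    ((tail_tendsto hpos hint).eventually (eventually_lt_nhds hδ))
  filter_upwards [eventually_ge_atTop (max T₁ (T₁ + max S 0))] with t ht
  have htT : T₁ ≤ t := le_trans (le_max_left _ _) ht
  have htS : max S 0 ≤ t - T₁ := by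
    have := le_trans (le_max_right T₁ (T₁ + max S 0)) ht; linarith
  have ht0 : 0 ≤ t := le_trans hT₁ htT
  have htT0 : 0 ≤ t - T₁ := le_trans (le_max_right S 0) htS
  have i1 : IntervalIntegrable (fun u => h (t - u) * f u) volume 0 T₁ :=
    conv_ii hm hpos hint hfc htT hT₁ le_rfl
  have i2 : IntervalIntegrable (fun u => h (t - u) * f u) volume T₁ t :=
    conv_ii hm hpos hint hfc le_rfl htT hT₁
  have hsplit : convK h f t = (∫ u in (0:ℝ)..T₁, h (t-u) * f u) + ∫ u in T₁..t, h (t-u) * f u :=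
    (intervalIntegral.integral_add_adjacent_intervals i1 i2).symm
  have p1 : (∫ u in (0:ℝ)..T₁, h (t-u) * f u) ≤ M * ∫ s in Set.Ioi (t - T₁), h s := by
    have b1 : (∫ u in (0:ℝ)..T₁, h (t-u) * f u) ≤ ∫ u in (0:ℝ)..T₁, M * h (t-u) := by
      apply intervalIntegral.integral_mono_on hT₁ i1 ((kern_refl_ii hint htT hT₁).const_mul M)
      intro u hu
      have h0 : 0 ≤ h (t - u) := hpos _ (by linarith [hu.2])
      calc h (t-u) * f u ≤ h (t-u) * M := mul_le_mul_of_nonneg_left (hM u hu.1) h0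
        _ = M * h (t-u) := mul_comm _ _
    have b2 : (∫ u in (0:ℝ)..T₁, M * h (t-u)) = M * ∫ s in (t-T₁)..t, h s := by
      rw [intervalIntegral.integral_const_mul, kern_refl_int]; ring_nf
    have b3 : (∫ s in (t-T₁)..t, h s) ≤ ∫ s in Set.Ioi (t - T₁), h s := by
      rw [intervalIntegral.integral_of_le (by linarith)]
      apply setIntegral_mono_set (hint.mono_set (fun y hy => lt_of_le_of_lt htT0 hy))
      · exact (MeasureTheory.ae_restrict_iff' measurableSet_Ioi).2
          (MeasureTheory.ae_of_all _ fun x hx => hpos x (le_trans htT0 (le_of_lt hx)))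
      · exact HasSubset.Subset.eventuallyLE Ioc_subset_Ioi_self
    calc (∫ u in (0:ℝ)..T₁, h (t-u) * f u) ≤ M * ∫ s in (t-T₁)..t, h s := by rw [← b2]; exact b1
      _ ≤ M * ∫ s in Set.Ioi (t - T₁), h s := mul_le_mul_of_nonneg_left b3 hM0
  have p2 : (∫ u in T₁..t, h (t-u) * f u) ≤ U * l1 h := by
    have b1 : (∫ u in T₁..t, h (t-u) * f u) ≤ ∫ u in T₁..t, U * h (t-u) := by
      apply intervalIntegral.integral_mono_on htT i2 ((kern_refl_ii hint le_rfl htT).const_mul U)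
      intro u hu
      have h0 : 0 ≤ h (t - u) := hpos _ (by linarith [hu.2])
      calc h (t-u) * f u ≤ h (t-u) * U := mul_le_mul_of_nonneg_left (hUT u hu.1) h0
        _ = U * h (t-u) := mul_comm _ _
    have b2 : (∫ u in T₁..t, U * h (t-u)) = U * ∫ s in (0:ℝ)..(t - T₁), h s := by
      rw [intervalIntegral.integral_const_mul, kern_refl_int]; ring_nf
    calc (∫ u in T₁..t, h (t-u) * f u) ≤ U * ∫ s in (0:ℝ)..(t-T₁), h s := by rw [← b2]; exact b1
      _ ≤ U * l1 h := mul_le_mul_of_nonneg_left (int_le_l1 hpos hint htT0) hU0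
  have ptail : M * (∫ s in Set.Ioi (t - T₁), h s) ≤ ε := by
    have := hS (t - T₁) (le_trans (le_max_left S 0) htS)
    have hnn : 0 ≤ ∫ s in Set.Ioi (t - T₁), h s :=
      setIntegral_nonneg measurableSet_Ioi (fun x hx => hpos x (le_trans htT0 (le_of_lt hx)))
    calc M * (∫ s in Set.Ioi (t - T₁), h s) ≤ M * (ε / (M+1)) :=
          mul_le_mul_of_nonneg_left (le_of_lt this) hM0
      _ ≤ ε := mul_div_self_add_le hM0 (le_of_lt hε)
  calc convK h f t = _ := hsplit
    _ ≤ M * (∫ s in Set.Ioi (t - T₁), h s) + (U * l1 h) := add_le_add p1 p2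
    _ ≤ U * l1 h + ε := by linarith

include hm hpos hint hfc hf0 in
lemma conv_ev_ge {V T₁ ε : ℝ} (hV0 : 0 ≤ V) (hT₁ : 0 ≤ T₁)
    (hVT : ∀ u, T₁ ≤ u → V ≤ f u) (hε : 0 < ε) :
    ∀ᶠ t in atTop, V * l1 h - ε ≤ convK h f t := by
  have hδ : (0:ℝ) < ε / (V + 1) := by positivity
  have h1 : Tendsto (fun b : ℝ => ∫ s in (0:ℝ)..b, h s) atTop (𝓝 (l1 h)) :=
    intervalIntegral_tendsto_integral_Ioi 0 hint tendsto_id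
  obtain ⟨S, hS⟩ := eventually_atTop.1 (h1.eventually (eventually_gt_nhds (by linarith : l1 h - ε/(V+1) < l1 h)))
  filter_upwards [eventually_ge_atTop (max T₁ (T₁ + max S 0))] with t ht
  have htT : T₁ ≤ t := le_trans (le_max_left _ _) ht
  have htS : max S 0 ≤ t - T₁ := by
    have := le_trans (le_max_right T₁ (T₁ + max S 0)) ht; linarith
  have ht0 : 0 ≤ t := le_trans hT₁ htT
  have htT0 : 0 ≤ t - T₁ := le_trans (le_max_right S 0) htS
  have i1 : IntervalIntegrable (fun u => h (t - u) * f u) volume 0 T₁ :=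
    conv_ii hm hpos hint hfc htT hT₁ le_rfl
  have i2 : IntervalIntegrable (fun u => h (t - u) * f u) volume T₁ t :=
    conv_ii hm hpos hint hfc le_rfl htT hT₁
  have hsplit : convK h f t = (∫ u in (0:ℝ)..T₁, h (t-u) * f u) + ∫ u in T₁..t, h (t-u) * f u :=
    (intervalIntegral.integral_add_adjacent_intervals i1 i2).symm
  have p1 : (0:ℝ) ≤ ∫ u in (0:ℝ)..T₁, h (t-u) * f u := by
    apply intervalIntegral.integral_nonneg hT₁
    intro u hu
    exact mul_nonneg (hpos _ (by linarith [hu.2])) (hf0 u)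
  have p2 : V * (∫ s in (0:ℝ)..(t - T₁), h s) ≤ ∫ u in T₁..t, h (t-u) * f u := by
    have b1 : (∫ u in T₁..t, V * h (t-u)) ≤ ∫ u in T₁..t, h (t-u) * f u := by
      apply intervalIntegral.integral_mono_on htT ((kern_refl_ii hint le_rfl htT).const_mul V) i2
      intro u hu
      have h0 : 0 ≤ h (t - u) := hpos _ (by linarith [hu.2])
      calc V * h (t-u) = h (t-u) * V := mul_comm _ _
        _ ≤ h (t-u) * f u := mul_le_mul_of_nonneg_left (hVT u hu.1) h0
    have b2 : (∫ u in T₁..t, V * h (t-u)) = V * ∫ s in (0:ℝ)..(t - T₁), h s := by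
      rw [intervalIntegral.integral_const_mul, kern_refl_int]; ring_nf
    rw [← b2]; exact b1
  have p3 : V * l1 h - ε ≤ V * ∫ s in (0:ℝ)..(t - T₁), h s := by
    have := hS (t - T₁) (le_trans (le_max_left S 0) htS)
    have : V * (l1 h - ε/(V+1)) ≤ V * ∫ s in (0:ℝ)..(t - T₁), h s :=
      mul_le_mul_of_nonneg_left (le_of_lt this) hV0
    have hVd : V * (ε/(V+1)) ≤ ε := mul_div_self_add_le hV0 (le_of_lt hε)
    nlinarith
  linarith [hsplit, p1, p2, p3]

include hm hpos hint hfc hf0 in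
lemma conv_limsup_le {M ε : ℝ} (hM : ∀ u, 0 ≤ u → f u ≤ M) (hε : 0 < ε) :
    ∀ᶠ t in atTop, convK h f t ≤ l1 h * Filter.limsup f atTop + ε := by
  have hl1 : 0 ≤ l1 h := l1_nonneg hpos hint
  set L := Filter.limsup f atTop with hL
  have hBdd : Filter.IsBoundedUnder (· ≤ ·) atTop f :=
    isBoundedUnder_of_eventually_le ((eventually_ge_atTop (0:ℝ)).mono (fun u hu => hM u hu))
  have hBdd2 : Filter.IsBoundedUnder (· ≥ ·) atTop f :=
    isBoundedUnder_of ⟨0, fun u => hf0 u⟩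
  have hL0 : 0 ≤ L := by
    have h0 : (0:ℝ) ≤ Filter.liminf f atTop :=
      le_liminf_of_le hBdd.isCoboundedUnder_ge (Eventually.of_forall (fun u => hf0 u))
    exact le_trans h0 (liminf_le_limsup hBdd hBdd2)
  have hε₁ : (0:ℝ) < ε / (2 * (l1 h + 1)) := by positivity
  set ε₁ := ε / (2 * (l1 h + 1)) with hε₁def
  have hev : ∀ᶠ u in atTop, f u ≤ L + ε₁ :=
    (eventually_lt_of_limsup_lt (by linarith) hBdd).mono (fun u hu => le_of_lt hu)
  obtain ⟨T, hT⟩ := eventually_atTop.1 hev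
  have h2 : ∀ᶠ t in atTop, convK h f t ≤ (L + ε₁) * l1 h + ε/2 :=
    conv_ev_le hm hpos hint hfc hf0 hM (by linarith) (le_max_right T 0)
      (fun u hu => hT u (le_trans (le_max_left T 0) hu)) (by linarith)
  refine h2.mono (fun t htle => le_trans htle ?_)
  have : l1 h * ε₁ ≤ ε/2 := by
    have h3 : ε₁ = (ε/2)/(l1 h + 1) := by rw [hε₁def, ← div_div]
    rw [h3]; exact mul_div_self_add_le hl1 (by linarith)
  nlinarith

include hm hpos hint hfc hf0 in
lemma conv_liminf_ge {M ε : ℝ} (hM : ∀ u, 0 ≤ u → f u ≤ M) (hε : 0 < ε) :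
    ∀ᶠ t in atTop, l1 h * Filter.liminf f atTop - ε ≤ convK h f t := by
  have hl1 : 0 ≤ l1 h := l1_nonneg hpos hint
  set L := Filter.liminf f atTop with hL
  have hBdd : Filter.IsBoundedUnder (· ≤ ·) atTop f :=
    isBoundedUnder_of_eventually_le ((eventually_ge_atTop (0:ℝ)).mono (fun u hu => hM u hu))
  have hBdd2 : Filter.IsBoundedUnder (· ≥ ·) atTop f :=
    isBoundedUnder_of ⟨0, fun u => hf0 u⟩
  have hL0 : 0 ≤ L :=
    le_liminf_of_le hBdd.isCoboundedUnder_ge (Eventually.of_forall (fun u => hf0 u))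
  have hε₁ : (0:ℝ) < ε / (2 * (l1 h + 1)) := by positivity
  set ε₁ := ε / (2 * (l1 h + 1)) with hε₁def
  set V := max (L - ε₁) 0 with hV
  have hV0 : 0 ≤ V := le_max_right _ _
  have hev : ∀ᶠ u in atTop, V ≤ f u := by
    have h1 : ∀ᶠ u in atTop, L - ε₁ < f u :=
      eventually_lt_of_lt_liminf (by linarith) hBdd2
    exact h1.mono (fun u hu => max_le (le_of_lt hu) (hf0 u))
  obtain ⟨T, hT⟩ := eventually_atTop.1 hev
  have h2 : ∀ᶠ t in atTop, V * l1 h - ε/2 ≤ convK h f t :=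
    conv_ev_ge hm hpos hint hfc hf0 hV0 (le_max_right T 0)
      (fun u hu => hT u (le_trans (le_max_left T 0) hu)) (by linarith)
  refine h2.mono (fun t htle => le_trans ?_ htle)
  have hVge : L - ε₁ ≤ V := le_max_left _ _
  have : l1 h * ε₁ ≤ ε/2 := by
    have h3 : ε₁ = (ε/2)/(l1 h + 1) := by rw [hε₁def, ← div_div]
    rw [h3]; exact mul_div_self_add_le hl1 (by linarith)
  nlinarith
end Kern2

section RpowMVT
variable {β : ℝ} (hβ0 : 0 < β) (hβ1 : β ≤ 1)

include hβ0 hβ1 in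
lemma rpow_mvt_upper {u v : ℝ} (hu : 0 < u) (huv : u ≤ v) :
    v^β - u^β ≤ β * u^(β-1) * (v - u) := by
  rcases eq_or_lt_of_le huv with rfl | hlt
  · simp only [sub_self, mul_zero]; exact le_refl 0
  have hv : 0 < v := lt_trans hu hlt
  obtain ⟨ξ, hξ, hslope⟩ := exists_hasDerivAt_eq_slope (fun x => x ^ β)
    (fun x => β * x ^ (β - 1)) hlt
    (fun x hx => (Real.continuousAt_rpow_const x β (Or.inl (ne_of_gt (lt_of_lt_of_le hu hx.1)))).continuousWithinAt)
    (fun x hx => Real.hasDerivAt_rpow_const (Or.inl (ne_of_gt (lt_trans hu hx.1))))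
  have hξu : u < ξ := hξ.1
  have hmono : ξ ^ (β - 1) ≤ u ^ (β - 1) :=
    Real.rpow_le_rpow_of_nonpos hu (le_of_lt hξu) (by linarith)
  have heq : v ^ β - u ^ β = β * ξ ^ (β-1) * (v - u) := by
    rw [eq_div_iff (by linarith : v - u ≠ 0)] at hslope
    linarith [hslope]
  rw [heq]
  have hb : 0 ≤ β * (v - u) := mul_nonneg (le_of_lt hβ0) (by linarith)
  calc β * ξ ^ (β-1) * (v - u) = (β * (v-u)) * ξ^(β-1) := by ring
    _ ≤ (β * (v-u)) * u^(β-1) := mul_le_mul_of_nonneg_left hmono hb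
    _ = β * u^(β-1) * (v - u) := by ring

include hβ0 hβ1 in
lemma rpow_mvt_lower {u v : ℝ} (hu : 0 ≤ u) (hv : 0 < v) (huv : u ≤ v) :
    β * v^(β-1) * (v - u) ≤ v^β - u^β := by
  rcases eq_or_lt_of_le hu with rfl | hu0
  · rw [Real.zero_rpow (ne_of_gt hβ0)]
    have h1 : v ^ (β-1) * v = v ^ β := by
      rw [← Real.rpow_add_one (ne_of_gt hv) (β-1)]; ring_nf
    have h2 : β * v^(β-1) * (v - 0) = β * v^β := by rw [sub_zero, mul_assoc, h1]
    rw [h2, sub_zero]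
    nlinarith [Real.rpow_nonneg (le_of_lt hv) β]
  rcases eq_or_lt_of_le huv with rfl | hlt
  · simp only [sub_self, mul_zero]; exact le_refl 0
  obtain ⟨ξ, hξ, hslope⟩ := exists_hasDerivAt_eq_slope (fun x => x ^ β)
    (fun x => β * x ^ (β - 1)) hlt
    (fun x hx => (Real.continuousAt_rpow_const x β (Or.inl (ne_of_gt (lt_of_lt_of_le hu0 hx.1)))).continuousWithinAt)
    (fun x hx => Real.hasDerivAt_rpow_const (Or.inl (ne_of_gt (lt_trans hu0 hx.1))))
  have hξv : ξ < v := hξ.2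
  have hξ0 : 0 < ξ := lt_trans hu0 hξ.1
  have hmono : v ^ (β - 1) ≤ ξ ^ (β - 1) :=
    Real.rpow_le_rpow_of_nonpos hξ0 (le_of_lt hξv) (by linarith)
  have heq : v ^ β - u ^ β = β * ξ ^ (β-1) * (v - u) := by
    rw [eq_div_iff (by linarith : v - u ≠ 0)] at hslope
    linarith [hslope]
  rw [heq]
  have hb : 0 ≤ β * (v - u) := mul_nonneg (le_of_lt hβ0) (by linarith)
  calc β * v ^ (β-1) * (v - u) = (β * (v-u)) * v^(β-1) := by ring
    _ ≤ (β * (v-u)) * ξ^(β-1) := mul_le_mul_of_nonneg_left hmono hb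
    _ = β * ξ^(β-1) * (v - u) := by ring
end RpowMVT

noncomputable def Dden (τ β κ₁ κ₂ : ℝ) (x : ℝ) : ℝ := 1 - κ₁ + τ * (κ₂ * x)^β
noncomputable def Fmap (τ β κ₁ κ₂ c D' : ℝ) (x : ℝ) : ℝ := c + D' / Dden τ β κ₁ κ₂ x

section FP
variable {τ β κ₁ κ₂ c D' : ℝ} (hτ : 0 < τ) (hβ0 : 0 < β) (hβ1 : β ≤ 1)
  (hκ₂ : 0 < κ₂) (hc : 0 ≤ c) (hD' : 0 < D') (hcrit : κ₁ < 1 + τ * (κ₂*c)^β)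

include hτ hβ0 hβ1 hκ₂ hc hcrit in
lemma Dden_pos {x : ℝ} (hx : c ≤ x) : 0 < Dden τ β κ₁ κ₂ x := by
  have h1 : (κ₂*c)^β ≤ (κ₂*x)^β :=
    Real.rpow_le_rpow (mul_nonneg (le_of_lt hκ₂) hc) (mul_le_mul_of_nonneg_left hx (le_of_lt hκ₂)) (le_of_lt hβ0)
  have := mul_le_mul_of_nonneg_left h1 (le_of_lt hτ)
  unfold Dden; linarith

include hτ hβ0 hκ₂ hc in
lemma Dden_lt {x y : ℝ} (hx : c ≤ x) (hxy : x < y) : Dden τ β κ₁ κ₂ x < Dden τ β κ₁ κ₂ y := by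
  have h1 : (κ₂*x)^β < (κ₂*y)^β :=
    Real.rpow_lt_rpow (mul_nonneg (le_of_lt hκ₂) (le_trans hc hx))
      ((mul_lt_mul_iff_right₀ hκ₂).2 hxy) hβ0
  have := (mul_lt_mul_iff_right₀ hτ).2 h1
  unfold Dden; linarith

include hτ hβ0 hβ1 hκ₂ hc hD' hcrit in
lemma Fmap_gt_c {x : ℝ} (hx : c ≤ x) : c < Fmap τ β κ₁ κ₂ c D' x := by
  have := div_pos hD' (Dden_pos hτ hβ0 hβ1 hκ₂ hc hcrit hx)
  unfold Fmap; linarith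

include hτ hβ0 hβ1 hκ₂ hc hD' hcrit in
lemma Fmap_strict_anti {x y : ℝ} (hx : c ≤ x) (hxy : x < y) :
    Fmap τ β κ₁ κ₂ c D' y < Fmap τ β κ₁ κ₂ c D' x := by
  have h1 := div_lt_div_of_pos_left hD' (Dden_pos hτ hβ0 hβ1 hκ₂ hc hcrit hx) (Dden_lt hτ hβ0 hκ₂ hc hx hxy)
  unfold Fmap; linarith

include hτ hβ0 hβ1 hκ₂ hc hD' hcrit in
lemma Fmap_anti {x y : ℝ} (hx : c ≤ x) (hxy : x ≤ y) :
    Fmap τ β κ₁ κ₂ c D' y ≤ Fmap τ β κ₁ κ₂ c D' x := by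
  rcases eq_or_lt_of_le hxy with rfl | h
  · exact le_refl _
  · exact le_of_lt (Fmap_strict_anti hτ hβ0 hβ1 hκ₂ hc hD' hcrit hx h)

include hτ hβ0 hβ1 hκ₂ hc hcrit in
lemma Dden_contOn : ContinuousOn (Dden τ β κ₁ κ₂) (Ici c) := by
  intro x hx
  have h1 : ContinuousAt (fun x : ℝ => (κ₂ * x)^β) x := by
    have h2 : ContinuousAt (fun y : ℝ => y ^ β) (κ₂ * x) :=
      Real.continuousAt_rpow_const _ _ (Or.inr (le_of_lt hβ0))
    exact h2.comp ((continuous_const.mul continuous_id).continuousAt)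
  exact (continuousAt_const.add (continuousAt_const.mul h1)).continuousWithinAt

include hτ hβ0 hβ1 hκ₂ hc hD' hcrit in
lemma Fmap_contOn : ContinuousOn (Fmap τ β κ₁ κ₂ c D') (Ici c) := by
  apply continuousOn_const.add
  exact continuousOn_const.div (Dden_contOn hτ hβ0 hβ1 hκ₂ hc hcrit)
    (fun x hx => ne_of_gt (Dden_pos hτ hβ0 hβ1 hκ₂ hc hcrit hx))

include hτ hβ0 hβ1 hκ₂ hc hD' hcrit in
lemma Fmap_fixed :
    ∃ ℓ, c ≤ ℓ ∧ Fmap τ β κ₁ κ₂ c D' ℓ = ℓ ∧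
      (∀ x, c ≤ x → Fmap τ β κ₁ κ₂ c D' x = x → x = ℓ) := by
  set F := Fmap τ β κ₁ κ₂ c D' with hF
  set R := F c with hR
  have hcR : c < R := Fmap_gt_c hτ hβ0 hβ1 hκ₂ hc hD' hcrit le_rfl
  have hg : ContinuousOn (fun x => F x - x) (Icc c R) :=
    ((Fmap_contOn hτ hβ0 hβ1 hκ₂ hc hD' hcrit).mono Icc_subset_Ici_self).sub continuousOn_id
  have hgc : 0 < F c - c := by linarith
  have hgR : F R - R < 0 := by
    have := Fmap_strict_anti hτ hβ0 hβ1 hκ₂ hc hD' hcrit le_rfl hcR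
    rw [← hF, ← hR] at this; linarith
  have hIVT := intermediate_value_Icc' (le_of_lt hcR) hg
  have h0 : (0:ℝ) ∈ Icc ((fun x => F x - x) R) ((fun x => F x - x) c) :=
    ⟨le_of_lt hgR, le_of_lt hgc⟩
  obtain ⟨ℓ, hℓmem, hℓ⟩ := hIVT h0
  have hfix : F ℓ = ℓ := by simpa [sub_eq_zero] using hℓ
  refine ⟨ℓ, hℓmem.1, hfix, fun x hx hfx => ?_⟩
  rcases lt_trichotomy x ℓ with h | h | h
  · have := Fmap_strict_anti hτ hβ0 hβ1 hκ₂ hc hD' hcrit hx h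
    rw [← hF, hfx, hfix] at this; exact absurd this (not_lt_of_gt h)
  · exact h
  · have := Fmap_strict_anti hτ hβ0 hβ1 hκ₂ hc hD' hcrit hℓmem.1 h
    rw [← hF, hfx, hfix] at this; exact absurd this (not_lt_of_gt h)

include hτ hβ0 hβ1 hκ₂ hc hD' hcrit in
lemma Fmap_twocycle {z y : ℝ} (hz : c ≤ z) (hy : c ≤ y)
    (h1 : Fmap τ β κ₁ κ₂ c D' z = y) (h2 : Fmap τ β κ₁ κ₂ c D' y = z) : z = y := by
  -- reduce to ordered case
  have main : ∀ z y : ℝ, c ≤ z → c ≤ y → z < y →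
      Fmap τ β κ₁ κ₂ c D' z = y → Fmap τ β κ₁ κ₂ c D' y = z → False := by
    clear h1 h2 hz hy z y
    intro z y hz hy hzy h1 h2
    have hcz : c < z := by
      rw [← h2]; exact Fmap_gt_c hτ hβ0 hβ1 hκ₂ hc hD' hcrit hy
    have hz0 : 0 < z := lt_of_le_of_lt hc hcz
    have hy0 : 0 < y := lt_trans hz0 hzy
    set Dz := Dden τ β κ₁ κ₂ z with hDz
    set Dy := Dden τ β κ₁ κ₂ y with hDy
    have hDzp : 0 < Dz := Dden_pos hτ hβ0 hβ1 hκ₂ hc hcrit hz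
    have hDyp : 0 < Dy := Dden_pos hτ hβ0 hβ1 hκ₂ hc hcrit hy
    have e1 : (y - c) * Dz = D' := by
      have : c + D' / Dz = y := h1
      field_simp at this ⊢; linarith
    have e2 : (z - c) * Dy = D' := by
      have : c + D' / Dy = z := h2
      field_simp at this ⊢; linarith
    have e3 : (y - z) * Dz = (z - c) * (Dy - Dz) := by nlinarith [e1, e2]
    -- rpow expansions
    have hmul : ∀ x : ℝ, 0 ≤ x → (κ₂ * x)^β = κ₂^β * x^β := fun x hx =>
      Real.mul_rpow (le_of_lt hκ₂) hx
    have hDzx : Dz = 1 - κ₁ + τ * (κ₂^β * z^β) := by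
      rw [hDz]; unfold Dden; rw [hmul z (le_of_lt hz0)]
    have hDyx : Dy = 1 - κ₁ + τ * (κ₂^β * y^β) := by
      rw [hDy]; unfold Dden; rw [hmul y (le_of_lt hy0)]
    set A := τ * κ₂^β with hA
    have hApos : 0 < A := mul_pos hτ (Real.rpow_pos_of_pos hκ₂ β)
    have hdiff : Dy - Dz = A * (y^β - z^β) := by rw [hDzx, hDyx, hA]; ring
    have key2 : y^β - z^β ≤ β * z^(β-1) * (y - z) := rpow_mvt_upper hβ0 hβ1 hz0 (le_of_lt hzy)
    have key1 : β * z^(β-1) * (z - c) ≤ z^β - c^β := rpow_mvt_lower hβ0 hβ1 hc hz0 (le_of_lt hcz)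
    -- combine
    have step1 : (y - z) * Dz ≤ (z - c) * (A * (β * z^(β-1) * (y - z))) := by
      rw [e3, hdiff]
      have : A * (y^β - z^β) ≤ A * (β * z^(β-1) * (y-z)) :=
        mul_le_mul_of_nonneg_left key2 (le_of_lt hApos)
      exact mul_le_mul_of_nonneg_left this (by linarith)
    have hyz : 0 < y - z := by linarith
    have step2 : Dz ≤ (z - c) * (A * (β * z^(β-1))) := by
      have h' : (y - z) * Dz ≤ (y - z) * ((z - c) * (A * (β * z^(β-1)))) :=
        step1.trans_eq (by ring)
      exact le_of_mul_le_mul_left h' hyz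
    have step3 : (z - c) * (A * (β * z^(β-1))) ≤ A * (z^β - c^β) := by
      have h'' := mul_le_mul_of_nonneg_left key1 (le_of_lt hApos)
      exact le_trans (le_of_eq (by ring)) h''
    have hcrit' : κ₁ < 1 + A * c^β := by
      have : (κ₂ * c)^β = κ₂^β * c^β := hmul c hc
      rw [hA]; rw [this] at hcrit; linarith [hcrit]
    rw [hDzx] at step2
    have hfin := le_trans step2 step3
    rw [hA] at hfin hcrit'
    linarith [hfin, hcrit']
  rcases lt_trichotomy z y with h | h | h
  · exact absurd (main z y hz hy h h1 h2) (fun x => x)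
  · exact h
  · exact absurd (main y z hy hz h h2 h1) (fun x => x)

include hτ hβ0 hβ1 hκ₂ hc hD' hcrit in
lemma Fmap_sandwich {ℓ x y : ℝ} (hℓc : c ≤ ℓ) (hfix : Fmap τ β κ₁ κ₂ c D' ℓ = ℓ)
    (huniq : ∀ w, c ≤ w → Fmap τ β κ₁ κ₂ c D' w = w → w = ℓ)
    (hx : c ≤ x) (hxy : x ≤ y) (hyF : y ≤ Fmap τ β κ₁ κ₂ c D' x)
    (hFy : Fmap τ β κ₁ κ₂ c D' y ≤ x) : x = ℓ ∧ y = ℓ := by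
  have hy : c ≤ y := le_trans hx hxy
  have hGx : Fmap τ β κ₁ κ₂ c D' (Fmap τ β κ₁ κ₂ c D' x) ≤ x :=
    le_trans (Fmap_anti hτ hβ0 hβ1 hκ₂ hc hD' hcrit hy hyF) hFy
  have hxℓ : ℓ ≤ x := by
    by_contra hcon
    push_neg at hcon
    have hFcont := Fmap_contOn hτ hβ0 hβ1 hκ₂ hc hD' hcrit
    have hG : ContinuousOn (fun s => Fmap τ β κ₁ κ₂ c D' (Fmap τ β κ₁ κ₂ c D' s) - s) (Icc c x) := by
      apply ContinuousOn.sub _ continuousOn_id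
      apply ContinuousOn.comp hFcont (hFcont.mono Icc_subset_Ici_self)
      intro s hs
      exact le_of_lt (Fmap_gt_c hτ hβ0 hβ1 hκ₂ hc hD' hcrit hs.1)
    have hGc : 0 < Fmap τ β κ₁ κ₂ c D' (Fmap τ β κ₁ κ₂ c D' c) - c :=
      sub_pos.2 (Fmap_gt_c hτ hβ0 hβ1 hκ₂ hc hD' hcrit
        (le_of_lt (Fmap_gt_c hτ hβ0 hβ1 hκ₂ hc hD' hcrit le_rfl)))
    have hGxneg : Fmap τ β κ₁ κ₂ c D' (Fmap τ β κ₁ κ₂ c D' x) - x ≤ 0 := sub_nonpos.2 hGx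
    have hIVT := intermediate_value_Icc' hx hG
    obtain ⟨z, hzmem, hz⟩ := hIVT ⟨hGxneg, le_of_lt hGc⟩
    have hzfix : Fmap τ β κ₁ κ₂ c D' (Fmap τ β κ₁ κ₂ c D' z) = z := by
      have := hz; simp only [sub_eq_zero] at this; exact this
    have hzc : c ≤ z := hzmem.1
    have hyc' : c ≤ Fmap τ β κ₁ κ₂ c D' z :=
      le_of_lt (Fmap_gt_c hτ hβ0 hβ1 hκ₂ hc hD' hcrit hzc)
    have hzy := Fmap_twocycle hτ hβ0 hβ1 hκ₂ hc hD' hcrit hzc hyc' rfl hzfix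
    have hzfix' : Fmap τ β κ₁ κ₂ c D' z = z := hzy.symm
    have hzℓ := huniq z hzc hzfix'
    have : z ≤ x := hzmem.2
    linarith [hcon]
  have hFxℓ : Fmap τ β κ₁ κ₂ c D' x ≤ ℓ := by
    have := Fmap_anti hτ hβ0 hβ1 hκ₂ hc hD' hcrit hℓc hxℓ
    rw [hfix] at this; exact this
  have hyℓ : y ≤ ℓ := le_trans hyF hFxℓ
  have hxeq : x = ℓ := le_antisymm (le_trans hxy hyℓ) hxℓ
  refine ⟨hxeq, le_antisymm hyℓ ?_⟩
  rw [← hxeq]; exact hxy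
end FP


lemma le_of_forall_sub_le' {a b : ℝ} (h : ∀ ε > 0, a - ε ≤ b) : a ≤ b := by
  by_contra hc
  push_neg at hc
  have := h ((a-b)/2) (by linarith)
  linarith


/-- Convergence for polynomial inhibition `Φ_{B→A}(x) = 1/(1+τx^β)`, `β ∈ (0,1]`,
with `Φ_{A→B}(x) = x`, under `κ₁ < 1 + τa^β`. -/
theorem stmt16
    (α : ℝ) (hα : α ∈ Set.Ioo (0:ℝ) 1)
    (h₁ h₂ h₃ h₄ : ℝ → ℝ)
    (hh₁ : KernelOK h₁) (hh₂ : KernelOK h₂) (hh₃ : KernelOK h₃) (hh₄ : KernelOK h₄)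
    (κ₁ κ₂ κ₃ κ₄ : ℝ)
    (hκ₁ : κ₁ = α * l1 h₁) (hκ₂ : κ₂ = (1 - α) * l1 h₂)
    (hκ₃ : κ₃ = (1 - α) * l1 h₃) (hκ₄ : κ₄ = α * l1 h₄)
    
    (μA μB : ℝ) (hμA : 0 < μA) (hμB : 0 ≤ μB)
    (τ β : ℝ) (hτ : 0 < τ) (hβ : 0 < β ∧ β ≤ 1)
    (a b : ℝ) (ha : a = μB * κ₂ / (1 - κ₃)) (hb : b = κ₂ * κ₄ / (1 - κ₃))
    (hk2 : 0 < κ₂) (hk4 : 0 < κ₄) (hk3 : κ₃ < 1)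
    (hcrit : κ₁ < 1 + τ * a ^ β) :
    ∃ ℓ : ℝ,
      (μB / (1 - κ₃) ≤ ℓ ∧
        a / κ₂ + μA * b / (κ₂ * (1 - κ₁ + τ * (κ₂ * ℓ) ^ β)) = ℓ ∧
        ∀ x : ℝ, μB / (1 - κ₃) ≤ x →
          a / κ₂ + μA * b / (κ₂ * (1 - κ₁ + τ * (κ₂ * x) ^ β)) = x → x = ℓ) ∧
      ∀ lA lB,
        IsLinSys α h₁ h₂ h₃ h₄
          (fun x => 1 / (1 + τ * x ^ β)) (fun x => x) μA μB lA lB →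
        Tendsto lB atTop (𝓝 ℓ) ∧
        Tendsto lA atTop (𝓝 (μA / (1 - κ₁ + τ * (κ₂ * ℓ) ^ β))) := by
  
  obtain ⟨hβ0, hβ1⟩ := hβ
  obtain ⟨hα0, hα1⟩ := hα
  have hα1' : 0 < 1 - α := by linarith
  obtain ⟨⟨hm1, hp1, hi1⟩, -⟩ := hh₁
  obtain ⟨⟨hm2, hp2, hi2⟩, -⟩ := hh₂
  obtain ⟨⟨hm3, hp3, hi3⟩, -⟩ := hh₃
  obtain ⟨⟨hm4, hp4, hi4⟩, -⟩ := hh₄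
  have hl11 : 0 ≤ l1 h₁ := l1_nonneg hp1 hi1
  have hl12 : 0 ≤ l1 h₂ := l1_nonneg hp2 hi2
  have hl13 : 0 ≤ l1 h₃ := l1_nonneg hp3 hi3
  have hl14 : 0 ≤ l1 h₄ := l1_nonneg hp4 hi4
  have hκ₁0 : 0 ≤ κ₁ := by rw [hκ₁]; exact mul_nonneg (le_of_lt hα0) hl11
  have hκ₃0 : 0 ≤ κ₃ := by rw [hκ₃]; exact mul_nonneg (le_of_lt hα1') hl13
  have h1κ₃ : 0 < 1 - κ₃ := by linarith
  set c := μB / (1 - κ₃) with hcdef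
  have hc0 : 0 ≤ c := div_nonneg hμB (le_of_lt h1κ₃)
  have hceq : c * (1 - κ₃) = μB := by rw [hcdef]; field_simp
  have hac : a = κ₂ * c := by rw [ha, hcdef]; field_simp
  set D' := μA * κ₄ / (1 - κ₃) with hD'def
  have hD'pos : 0 < D' := div_pos (mul_pos hμA hk4) h1κ₃
  have hcrit' : κ₁ < 1 + τ * (κ₂ * c)^β := by rw [← hac]; exact hcrit
  obtain ⟨ℓ, hℓc, hℓfix, hℓuniq⟩ := Fmap_fixed hτ hβ0 hβ1 hk2 hc0 hD'pos hcrit'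
  have hDpos : ∀ x, c ≤ x → 0 < 1 - κ₁ + τ * (κ₂ * x)^β := fun x hx =>
    Dden_pos hτ hβ0 hβ1 hk2 hc0 hcrit' hx
  have hFeq : ∀ x, c ≤ x →
      a / κ₂ + μA * b / (κ₂ * (1 - κ₁ + τ * (κ₂ * x) ^ β)) = Fmap τ β κ₁ κ₂ c D' x := by
    intro x hx
    have hDne : (1 - κ₁ + τ * (κ₂ * x)^β) ≠ 0 := ne_of_gt (hDpos x hx)
    have h1 : a / κ₂ = c := by rw [hac]; field_simp
    have h2 : μA * b / (κ₂ * (1 - κ₁ + τ * (κ₂ * x) ^ β)) = D' / Dden τ β κ₁ κ₂ x := by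
      have hne : (1:ℝ) - κ₃ ≠ 0 := ne_of_gt h1κ₃
      rw [hb, hD'def]
      show _ = μA * κ₄ / (1 - κ₃) / (1 - κ₁ + τ * (κ₂ * x)^β)
      rw [div_div, div_eq_div_iff (by positivity) (by positivity)]
      field_simp
    show a / κ₂ + μA * b / (κ₂ * (1 - κ₁ + τ * (κ₂ * x) ^ β)) = c + D' / Dden τ β κ₁ κ₂ x
    rw [h1, h2]
  refine ⟨ℓ, ⟨hℓc, by rw [hFeq ℓ hℓc]; exact hℓfix,
    fun x hx heqx => hℓuniq x hx (by rw [← hFeq x hx]; exact heqx)⟩, ?_⟩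
  rintro lA lB ⟨hcA, hcB, hA0, hB0, heqA, heqB⟩
  have heqB' : ∀ t, 0 ≤ t → lB t = (μB + (1 - α) * convK h₃ lB t) + (α * convK h₄ lA t) := heqB
  have heqA' : ∀ t, 0 ≤ t →
      lA t = (μA + α * convK h₁ lA t) * (1 / (1 + τ * ((1 - α) * convK h₂ lB t) ^ β)) := heqA
  have hconv4nn : ∀ t, 0 ≤ t → 0 ≤ α * convK h₄ lA t := fun t ht =>
    mul_nonneg (le_of_lt hα0) (convK_nonneg hm4 hp4 hi4 hcA hA0 ht)
  have hconv2nn : ∀ t, 0 ≤ t → 0 ≤ (1 - α) * convK h₂ lB t := fun t ht =>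
    mul_nonneg (le_of_lt hα1') (convK_nonneg hm2 hp2 hi2 hcB hB0 ht)
  have claim1 : ∀ ε, 0 < ε → ∀ᶠ t in atTop, c - ε ≤ lB t := by
    have hrec : ∀ n : ℕ, ∀ ε, 0 < ε → ∀ᶠ t in atTop, c * (1 - κ₃^n) - ε ≤ lB t := by
      intro n
      induction n with
      | zero =>
        intro ε hε
        filter_upwards [eventually_ge_atTop (0:ℝ)] with t ht
        have h0 : c * (1 - (κ₃:ℝ)^(0:ℕ)) = 0 := by simp
        rw [h0]
        linarith [hB0 t]
      | succ n ih =>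
        intro ε hε
        have hκ₃n1 : κ₃^n ≤ 1 := pow_le_one₀ hκ₃0 (le_of_lt hk3)
        set η := c * (1 - κ₃^n) with hη
        have hη0 : 0 ≤ η := mul_nonneg hc0 (by linarith)
        have hδ : 0 < (ε/2)/(κ₃+1) := by positivity
        obtain ⟨T, hT⟩ := eventually_atTop.1 (ih _ hδ)
        set V := max (η - (ε/2)/(κ₃+1)) 0 with hV
        have hV0 : 0 ≤ V := le_max_right _ _
        have hVd : η - (ε/2)/(κ₃+1) ≤ V := le_max_left _ _
        have hVle : ∀ u, max T 0 ≤ u → V ≤ lB u := fun u hu =>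
          max_le (hT u (le_trans (le_max_left _ _) hu)) (hB0 u)
        have hconv := conv_ev_ge hm3 hp3 hi3 hcB hB0 hV0 (le_max_right T 0) hVle (half_pos hε)
        filter_upwards [hconv, eventually_ge_atTop (0:ℝ)] with t hct ht0
        have hBt := heqB' t ht0
        have h4 := hconv4nn t ht0
        have h5 : (1 - α) * (V * l1 h₃ - ε/2) ≤ (1 - α) * convK h₃ lB t :=
          mul_le_mul_of_nonneg_left hct (le_of_lt hα1')
        have h6 : (1-α) * (V * l1 h₃) = κ₃ * V := by rw [hκ₃]; ring
        have h7 : (1-α) * (ε/2) ≤ ε/2 := by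
          have h7' := mul_le_mul_of_nonneg_right
            (by linarith only [hα0] : (1-α) ≤ (1:ℝ)) (le_of_lt (half_pos hε))
          simpa using h7'
        have h8 : κ₃ * (η - (ε/2)/(κ₃+1)) ≤ κ₃ * V := mul_le_mul_of_nonneg_left hVd hκ₃0
        have h9 : κ₃ * ((ε/2)/(κ₃+1)) ≤ ε/2 := mul_div_self_add_le hκ₃0 (by linarith)
        have h10 : c * (1 - κ₃^(n+1)) = μB + κ₃ * η := by
          rw [hη, pow_succ]; linear_combination hceq
        rw [h10]
        have e2 : κ₃ * V - ε/2 ≤ (1-α) * convK h₃ lB t := by linarith only [h5, h6, h7]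
        have e1 : κ₃ * η - ε ≤ κ₃ * V - ε/2 := by linarith only [h8, h9]
        linarith only [hBt, h4, e1, e2]
    intro ε hε
    have hc1 : 0 < ε/(2*(c+1)) := by positivity
    obtain ⟨n, hn⟩ := ((tendsto_pow_atTop_nhds_zero_of_lt_one hκ₃0 hk3).eventually
        (eventually_lt_nhds hc1)).exists
    have hcn : c * κ₃^n ≤ ε/2 := by
      have h1 : c * κ₃^n ≤ c * (ε/(2*(c+1))) := mul_le_mul_of_nonneg_left (le_of_lt hn) hc0
      have heq2 : ε/(2*(c+1)) = (ε/2)/(c+1) := by rw [← div_div]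
      have h2 := mul_div_self_add_le hc0 (le_of_lt (half_pos hε))
      rw [heq2] at h1
      linarith
    exact (hrec n (ε/2) (half_pos hε)).mono (fun t ht => by linarith only [ht, hcn])
  -- Step 2: choose inhibition level w
  obtain ⟨w, hw0, hwlt, T₀', hT₀'⟩ :
      ∃ w, 0 ≤ w ∧ κ₁ < 1 + τ * w^β ∧ ∃ T₀', ∀ t, T₀' ≤ t → w ≤ (1 - α) * convK h₂ lB t := by
    rcases eq_or_lt_of_le hc0 with hcz | hcpos
    · refine ⟨0, le_rfl, ?_, 0, fun t ht => hconv2nn t ht⟩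
      have hz : ((0:ℝ))^β = 0 := Real.zero_rpow (ne_of_gt hβ0)
      rw [hz, mul_zero, add_zero]
      have hcc := hcrit'
      have h2 : (κ₂ * c)^β = 0 := by
        rw [← hcz, mul_zero]; exact Real.zero_rpow (ne_of_gt hβ0)
      rw [h2, mul_zero, add_zero] at hcc
      exact hcc
    · have hcont : ContinuousAt (fun e : ℝ => 1 + τ * (κ₂*(c - e))^β) 0 := by
        have h2 : ContinuousAt (fun y : ℝ => y ^ β) (κ₂*(c - 0)) := by
          apply Real.continuousAt_rpow_const
          left
          have hgt : 0 < κ₂ * (c - 0) := by rw [sub_zero]; exact mul_pos hk2 hcpos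
          exact ne_of_gt hgt
        have h3 : ContinuousAt (fun e : ℝ => κ₂ * (c - e)) 0 :=
          (continuous_const.mul (continuous_const.sub continuous_id)).continuousAt
        have h4 : ContinuousAt (fun e : ℝ => (κ₂*(c - e))^β) 0 :=
          ContinuousAt.comp (g := fun y : ℝ => y ^ β) (f := fun e : ℝ => κ₂ * (c - e)) h2 h3
        exact continuousAt_const.add (continuousAt_const.mul h4)
      have hval : κ₁ < (fun e : ℝ => 1 + τ * (κ₂*(c - e))^β) 0 := by simpa using hcrit'
      have hev1 : ∀ᶠ e in 𝓝[>] (0:ℝ), κ₁ < 1 + τ * (κ₂*(c - e))^β :=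
        (hcont.eventually (eventually_gt_nhds hval)).filter_mono nhdsWithin_le_nhds
      have hev2 : ∀ᶠ e in 𝓝[>] (0:ℝ), e < c :=
        (eventually_lt_nhds hcpos).filter_mono nhdsWithin_le_nhds
      have hev3 : ∀ᶠ e in 𝓝[>] (0:ℝ), 0 < e := eventually_mem_nhdsWithin
      obtain ⟨e, he1, he2, he3⟩ := (hev1.and (hev2.and hev3)).exists
      obtain ⟨T1, hT1⟩ := eventually_atTop.1 (claim1 (e/2) (half_pos he3))
      have hVle : ∀ u, max T1 0 ≤ u → (c - e/2) ≤ lB u := fun u hu =>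
        hT1 u (le_trans (le_max_left _ _) hu)
      have hV0 : 0 ≤ c - e/2 := by linarith only [he2, he3]
      have hε3 : 0 < κ₂ * e / 2 := by positivity
      obtain ⟨T2, hT2⟩ := eventually_atTop.1
        (conv_ev_ge hm2 hp2 hi2 hcB hB0 hV0 (le_max_right T1 0) hVle hε3)
      refine ⟨κ₂ * (c - e), mul_nonneg (le_of_lt hk2) (by linarith only [he2]), he1, T2, ?_⟩
      intro t ht
      have h5 := hT2 t ht
      have h6 : (1-α)*((c - e/2) * l1 h₂ - κ₂*e/2) ≤ (1-α) * convK h₂ lB t :=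
        mul_le_mul_of_nonneg_left h5 (le_of_lt hα1')
      have h7 : (1-α)*((c - e/2) * l1 h₂) = κ₂ * (c - e/2) := by rw [hκ₂]; ring
      have h8 : (1-α)*(κ₂*e/2) ≤ κ₂*e/2 := by
        have h8' := mul_le_mul_of_nonneg_right
          (by linarith only [hα0] : (1-α) ≤ (1:ℝ)) (le_of_lt hε3)
        simpa using h8'
      linarith only [h6, h7, h8]
  -- Step 3: lA is bounded
  set P := 1 + τ * w^β with hPdef
  have hP1 : 1 ≤ P := by
    have hr := mul_nonneg (le_of_lt hτ) (Real.rpow_nonneg hw0 β)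
    rw [hPdef]; linarith only [hr]
  have hPpos : 0 < P := lt_of_lt_of_le zero_lt_one hP1
  have hPκ : κ₁ < P := hwlt
  have hkey : ∀ t, max T₀' 0 ≤ t → ∀ m, 0 ≤ m → (∀ u, u ∈ Icc 0 t → lA u ≤ m) →
      lA t ≤ μA/P + (κ₁/P) * m := by
    intro t ht m hm0 hmb
    have ht0 : 0 ≤ t := le_trans (le_max_right _ _) ht
    have hAt := heqA' t ht0
    set s := (1 - α) * convK h₂ lB t with hs
    have hs0 : 0 ≤ s := hconv2nn t ht0
    have hsw : w ≤ s := hT₀' t (le_trans (le_max_left _ _) ht)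
    have hden : P ≤ 1 + τ * s^β := by
      have hr := Real.rpow_le_rpow hw0 hsw (le_of_lt hβ0)
      have hr2 := mul_le_mul_of_nonneg_left hr (le_of_lt hτ)
      rw [hPdef]; linarith only [hr2]
    have hdenpos : 0 < 1 + τ * s^β := lt_of_lt_of_le hPpos hden
    have hfrac : 1/(1 + τ * s^β) ≤ 1/P := one_div_le_one_div_of_le hPpos hden
    have hfrac0 : 0 ≤ 1/(1 + τ * s^β) := le_of_lt (by positivity)
    have hck := convK_le_of_le hm1 hp1 hi1 hcA hA0 ht0 hm0 hmb
    have hnum : μA + α * convK h₁ lA t ≤ μA + κ₁ * m := by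
      have h1 := mul_le_mul_of_nonneg_left hck (le_of_lt hα0)
      have h2 : α * (m * l1 h₁) = κ₁ * m := by rw [hκ₁]; ring
      linarith only [h1, h2]
    have hnum0' : 0 ≤ μA + κ₁ * m := add_nonneg (le_of_lt hμA) (mul_nonneg hκ₁0 hm0)
    calc lA t = (μA + α * convK h₁ lA t) * (1/(1 + τ * s^β)) := hAt
      _ ≤ (μA + κ₁ * m) * (1/P) := mul_le_mul hnum hfrac hfrac0 hnum0'
      _ = μA/P + (κ₁/P) * m := by ring
  obtain ⟨MA, hMA0, hMAb⟩ : ∃ MA, 0 ≤ MA ∧ ∀ t, 0 ≤ t → lA t ≤ MA := by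
    have hT₀0 : (0:ℝ) ≤ max T₀' 0 := le_max_right _ _
    obtain ⟨σ, hσmem, hσmax⟩ := isCompact_Icc.exists_isMaxOn (nonempty_Icc.2 hT₀0)
      hcA.continuousOn
    have hK0 : 0 ≤ lA σ := hA0 σ
    refine ⟨max (lA σ) (μA/(P - κ₁)), le_trans hK0 (le_max_left _ _), fun t ht0 => ?_⟩
    rcases le_total t (max T₀' 0) with htle | htge
    · exact le_trans (isMaxOn_iff.1 hσmax t ⟨ht0, htle⟩) (le_max_left _ _)
    · obtain ⟨s₀, hs₀mem, hs₀max⟩ := isCompact_Icc.exists_isMaxOn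
        (nonempty_Icc.2 ht0) hcA.continuousOn
      have htop : lA t ≤ lA s₀ := isMaxOn_iff.1 hs₀max t ⟨ht0, le_refl t⟩
      rcases le_total s₀ (max T₀' 0) with hsle | hsge
      · exact le_trans htop (le_trans (isMaxOn_iff.1 hσmax s₀ ⟨hs₀mem.1, hsle⟩)
          (le_max_left _ _))
      · have hb' : ∀ u, u ∈ Icc 0 s₀ → lA u ≤ lA s₀ := fun u hu =>
          isMaxOn_iff.1 hs₀max u ⟨hu.1, le_trans hu.2 hs₀mem.2⟩
        have hk' := hkey s₀ hsge (lA s₀) (hA0 s₀) hb'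
        have hP' : lA s₀ ≤ μA / (P - κ₁) := by
          rw [le_div_iff₀ (by linarith only [hPκ] : 0 < P - κ₁)]
          have h2 := mul_le_mul_of_nonneg_right hk' (le_of_lt hPpos)
          have h3 : (μA/P + (κ₁/P) * lA s₀) * P = μA + κ₁ * lA s₀ := by
            field_simp
          have h4 : lA s₀ * P ≤ μA + κ₁ * lA s₀ := h3 ▸ h2
          nlinarith [h4]
        exact le_trans htop (le_trans hP' (le_max_right _ _))
  -- Step 4: lB is bounded
  obtain ⟨MB, hMB0, hMBb⟩ : ∃ MB, 0 ≤ MB ∧ ∀ t, 0 ≤ t → lB t ≤ MB := by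
    refine ⟨(μB + κ₄ * MA)/(1 - κ₃),
      div_nonneg (add_nonneg hμB (mul_nonneg (le_of_lt hk4) hMA0)) (le_of_lt h1κ₃),
      fun t ht0 => ?_⟩
    obtain ⟨s₀, hs₀mem, hs₀max⟩ := isCompact_Icc.exists_isMaxOn (nonempty_Icc.2 ht0)
      hcB.continuousOn
    have htop : lB t ≤ lB s₀ := isMaxOn_iff.1 hs₀max t ⟨ht0, le_refl t⟩
    have hs₀0 : 0 ≤ s₀ := hs₀mem.1
    have hb3 : ∀ u, u ∈ Icc 0 s₀ → lB u ≤ lB s₀ := fun u hu =>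
      isMaxOn_iff.1 hs₀max u ⟨hu.1, le_trans hu.2 hs₀mem.2⟩
    have hc3 := convK_le_of_le hm3 hp3 hi3 hcB hB0 hs₀0 (hB0 s₀) hb3
    have hc4 := convK_le_of_le hm4 hp4 hi4 hcA hA0 hs₀0 hMA0 (fun u hu => hMAb u hu.1)
    have hBt := heqB' s₀ hs₀0
    have h5 : (1-α) * convK h₃ lB s₀ ≤ κ₃ * lB s₀ := by
      have h6 := mul_le_mul_of_nonneg_left hc3 (le_of_lt hα1')
      have h7 : (1-α)*(lB s₀ * l1 h₃) = κ₃ * lB s₀ := by rw [hκ₃]; ring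
      linarith only [h6, h7]
    have h8 : α * convK h₄ lA s₀ ≤ κ₄ * MA := by
      have h9 := mul_le_mul_of_nonneg_left hc4 (le_of_lt hα0)
      have h10 : α*(MA * l1 h₄) = κ₄ * MA := by rw [hκ₄]; ring
      linarith only [h9, h10]
    have h12 : lB s₀ ≤ (μB + κ₄ * MA)/(1-κ₃) := by
      rw [le_div_iff₀ h1κ₃]
      linarith only [hBt, h5, h8]
    linarith only [htop, h12]
  -- Step 5: limsup/liminf setup
  have hBddAle : Filter.IsBoundedUnder (· ≤ ·) atTop lA :=
    isBoundedUnder_of_eventually_le ((eventually_ge_atTop (0:ℝ)).mono (fun t ht => hMAb t ht))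
  have hBddAge : Filter.IsBoundedUnder (· ≥ ·) atTop lA := isBoundedUnder_of ⟨0, fun t => hA0 t⟩
  have hBddBle : Filter.IsBoundedUnder (· ≤ ·) atTop lB :=
    isBoundedUnder_of_eventually_le ((eventually_ge_atTop (0:ℝ)).mono (fun t ht => hMBb t ht))
  have hBddBge : Filter.IsBoundedUnder (· ≥ ·) atTop lB := isBoundedUnder_of ⟨0, fun t => hB0 t⟩
  have hLM0 : 0 ≤ Filter.liminf lA atTop :=
    le_liminf_of_le hBddAle.isCoboundedUnder_ge (Eventually.of_forall (fun t => hA0 t))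
  have hLMLP : Filter.liminf lA atTop ≤ Filter.limsup lA atTop :=
    liminf_le_limsup hBddAle hBddAge
  have hBM0 : 0 ≤ Filter.liminf lB atTop :=
    le_liminf_of_le hBddBle.isCoboundedUnder_ge (Eventually.of_forall (fun t => hB0 t))
  have hBMBP : Filter.liminf lB atTop ≤ Filter.limsup lB atTop :=
    liminf_le_limsup hBddBle hBddBge
  have hLP0 : 0 ≤ Filter.limsup lA atTop := le_trans hLM0 hLMLP
  have hBMc : c ≤ Filter.liminf lB atTop := by
    apply le_of_forall_sub_le'
    intro ε hε
    exact le_liminf_of_le hBddBle.isCoboundedUnder_ge (claim1 ε hε)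
  have hBPc : c ≤ Filter.limsup lB atTop := le_trans hBMc hBMBP
  have hhalf : ∀ ε : ℝ, 0 < ε → (1-α) * (ε/2) ≤ ε/2 := by
    intro ε hε
    have h8' := mul_le_mul_of_nonneg_right
      (by linarith only [hα0] : (1-α) ≤ (1:ℝ)) (le_of_lt (half_pos hε))
    simpa using h8'
  have hhalf' : ∀ ε : ℝ, 0 < ε → α * (ε/2) ≤ ε/2 := by
    intro ε hε
    have h8' := mul_le_mul_of_nonneg_right
      (by linarith only [hα1] : α ≤ (1:ℝ)) (le_of_lt (half_pos hε))
    simpa using h8'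
  have hfull : ∀ ε : ℝ, 0 < ε → (1-α) * ε ≤ ε := by
    intro ε hε
    have h8' := mul_le_mul_of_nonneg_right
      (by linarith only [hα0] : (1-α) ≤ (1:ℝ)) (le_of_lt hε)
    simpa using h8'
  have hfull' : ∀ ε : ℝ, 0 < ε → α * ε ≤ ε := by
    intro ε hε
    have h8' := mul_le_mul_of_nonneg_right
      (by linarith only [hα1] : α ≤ (1:ℝ)) (le_of_lt hε)
    simpa using h8'
  -- Step 6a: upper bound for limsup lB
  have hBPle : Filter.limsup lB atTop ≤
      μB + κ₃ * Filter.limsup lB atTop + κ₄ * Filter.limsup lA atTop := by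
    apply le_of_forall_pos_le_add
    intro ε hε
    apply limsup_le_of_le hBddBge.isCoboundedUnder_le
    have hcu3 := conv_limsup_le hm3 hp3 hi3 hcB hB0 hMBb (half_pos hε)
    have hcu4 := conv_limsup_le hm4 hp4 hi4 hcA hA0 hMAb (half_pos hε)
    filter_upwards [hcu3, hcu4, eventually_ge_atTop (0:ℝ)] with t h3 h4 ht0
    have hBt := heqB' t ht0
    have h5 : (1-α) * convK h₃ lB t ≤ κ₃ * Filter.limsup lB atTop + ε/2 := by
      have h6 := mul_le_mul_of_nonneg_left h3 (le_of_lt hα1')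
      have h7 : (1-α) * (l1 h₃ * Filter.limsup lB atTop) = κ₃ * Filter.limsup lB atTop := by
        rw [hκ₃]; ring
      linarith only [h6, h7, hhalf ε hε]
    have h9 : α * convK h₄ lA t ≤ κ₄ * Filter.limsup lA atTop + ε/2 := by
      have h10 := mul_le_mul_of_nonneg_left h4 (le_of_lt hα0)
      have h11 : α * (l1 h₄ * Filter.limsup lA atTop) = κ₄ * Filter.limsup lA atTop := by
        rw [hκ₄]; ring
      linarith only [h10, h11, hhalf' ε hε]
    linarith only [hBt, h5, h9]
  -- Step 6b: lower bound for liminf lB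
  have hBMge : μB + κ₃ * Filter.liminf lB atTop + κ₄ * Filter.liminf lA atTop ≤
      Filter.liminf lB atTop := by
    apply le_of_forall_sub_le'
    intro ε hε
    apply le_liminf_of_le hBddBle.isCoboundedUnder_ge
    have hcl3 := conv_liminf_ge hm3 hp3 hi3 hcB hB0 hMBb (half_pos hε)
    have hcl4 := conv_liminf_ge hm4 hp4 hi4 hcA hA0 hMAb (half_pos hε)
    filter_upwards [hcl3, hcl4, eventually_ge_atTop (0:ℝ)] with t h3 h4 ht0
    have hBt := heqB' t ht0
    have h5 : κ₃ * Filter.liminf lB atTop - ε/2 ≤ (1-α) * convK h₃ lB t := by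
      have h6 := mul_le_mul_of_nonneg_left h3 (le_of_lt hα1')
      have h7 : (1-α) * (l1 h₃ * Filter.liminf lB atTop) = κ₃ * Filter.liminf lB atTop := by
        rw [hκ₃]; ring
      linarith only [h6, h7, hhalf ε hε]
    have h9 : κ₄ * Filter.liminf lA atTop - ε/2 ≤ α * convK h₄ lA t := by
      have h10 := mul_le_mul_of_nonneg_left h4 (le_of_lt hα0)
      have h11 : α * (l1 h₄ * Filter.liminf lA atTop) = κ₄ * Filter.liminf lA atTop := by
        rw [hκ₄]; ring
      linarith only [h10, h11, hhalf' ε hε]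
    linarith only [hBt, h5, h9]
  -- Step 6c: limsup lA bound
  have hPBM : κ₁ < 1 + τ * (κ₂ * Filter.liminf lB atTop)^β := by
    have h1 : (κ₂*c)^β ≤ (κ₂ * Filter.liminf lB atTop)^β :=
      Real.rpow_le_rpow (mul_nonneg (le_of_lt hk2) hc0)
        (mul_le_mul_of_nonneg_left hBMc (le_of_lt hk2)) (le_of_lt hβ0)
    have h2 := mul_le_mul_of_nonneg_left h1 (le_of_lt hτ)
    linarith only [hcrit', h2]
  have hPBP : κ₁ < 1 + τ * (κ₂ * Filter.limsup lB atTop)^β := by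
    have h1 : (κ₂*c)^β ≤ (κ₂ * Filter.limsup lB atTop)^β :=
      Real.rpow_le_rpow (mul_nonneg (le_of_lt hk2) hc0)
        (mul_le_mul_of_nonneg_left hBPc (le_of_lt hk2)) (le_of_lt hβ0)
    have h2 := mul_le_mul_of_nonneg_left h1 (le_of_lt hτ)
    linarith only [hcrit', h2]
  have hLPle : Filter.limsup lA atTop ≤ (μA + κ₁ * Filter.limsup lA atTop) *
      (1/(1 + τ * (κ₂ * Filter.liminf lB atTop)^β)) := by
    have hstep : ∀ ε : ℝ, 0 < ε → Filter.limsup lA atTop ≤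
        (μA + κ₁ * Filter.limsup lA atTop + ε) *
        (1/(1 + τ * (max (κ₂ * Filter.liminf lB atTop - ε) 0)^β)) := by
      intro ε hε
      apply limsup_le_of_le hBddAge.isCoboundedUnder_le
      have hcu1 := conv_limsup_le hm1 hp1 hi1 hcA hA0 hMAb hε
      have hcl2 := conv_liminf_ge hm2 hp2 hi2 hcB hB0 hMBb hε
      filter_upwards [hcu1, hcl2, eventually_ge_atTop (0:ℝ)] with t h1 h2 ht0
      have hAt := heqA' t ht0
      set s := (1 - α) * convK h₂ lB t with hsdef
      have hs0 : 0 ≤ s := hconv2nn t ht0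
      have hnum : μA + α * convK h₁ lA t ≤ μA + κ₁ * Filter.limsup lA atTop + ε := by
        have h5 := mul_le_mul_of_nonneg_left h1 (le_of_lt hα0)
        have h6 : α * (l1 h₁ * Filter.limsup lA atTop) = κ₁ * Filter.limsup lA atTop := by
          rw [hκ₁]; ring
        linarith only [h5, h6, hfull' ε hε]
      have hsge : max (κ₂ * Filter.liminf lB atTop - ε) 0 ≤ s := by
        apply max_le _ hs0
        have h5 := mul_le_mul_of_nonneg_left h2 (le_of_lt hα1')
        have h6 : (1-α) * (l1 h₂ * Filter.liminf lB atTop) = κ₂ * Filter.liminf lB atTop := by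
          rw [hκ₂]; ring
        linarith only [h5, h6, hfull ε hε, hsdef]
      have hm0' : 0 ≤ max (κ₂ * Filter.liminf lB atTop - ε) 0 := le_max_right _ _
      have hden : 1 + τ * (max (κ₂ * Filter.liminf lB atTop - ε) 0)^β ≤ 1 + τ * s^β := by
        have hr := Real.rpow_le_rpow hm0' hsge (le_of_lt hβ0)
        have hr2 := mul_le_mul_of_nonneg_left hr (le_of_lt hτ)
        linarith only [hr2]
      have hdpos : 0 < 1 + τ * (max (κ₂ * Filter.liminf lB atTop - ε) 0)^β := by
        have hr := mul_nonneg (le_of_lt hτ) (Real.rpow_nonneg hm0' β)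
        linarith only [hr]
      have hfrac : 1/(1 + τ * s^β) ≤
          1/(1 + τ * (max (κ₂ * Filter.liminf lB atTop - ε) 0)^β) :=
        one_div_le_one_div_of_le hdpos hden
      have hfrac0 : 0 ≤ 1/(1 + τ * s^β) := by
        have hspos : 0 < 1 + τ * s^β := lt_of_lt_of_le hdpos hden
        positivity
      have hnum0 : 0 ≤ μA + κ₁ * Filter.limsup lA atTop + ε :=
        add_nonneg (add_nonneg (le_of_lt hμA) (mul_nonneg hκ₁0 hLP0)) (le_of_lt hε)
      calc lA t = (μA + α * convK h₁ lA t) * (1/(1 + τ * s^β)) := hAt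
        _ ≤ (μA + κ₁ * Filter.limsup lA atTop + ε) *
            (1/(1 + τ * (max (κ₂ * Filter.liminf lB atTop - ε) 0)^β)) :=
          mul_le_mul hnum hfrac hfrac0 hnum0
    have hmax0 : max (κ₂ * Filter.liminf lB atTop) 0 = κ₂ * Filter.liminf lB atTop :=
      max_eq_left (mul_nonneg (le_of_lt hk2) hBM0)
    have hcont : ContinuousAt (fun ε : ℝ => (μA + κ₁ * Filter.limsup lA atTop + ε) *
        (1/(1 + τ * (max (κ₂ * Filter.liminf lB atTop - ε) 0)^β))) 0 := by
      apply ContinuousAt.mul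
      · exact continuousAt_const.add continuous_id.continuousAt
      · apply ContinuousAt.div continuousAt_const
        · have hmc : ContinuousAt (fun ε : ℝ => max (κ₂ * Filter.liminf lB atTop - ε) 0) 0 :=
            ((continuous_const.sub continuous_id).max continuous_const).continuousAt
          have hrc : ContinuousAt (fun y : ℝ => y ^ β)
              (max (κ₂ * Filter.liminf lB atTop - 0) 0) :=
            Real.continuousAt_rpow_const _ _ (Or.inr (le_of_lt hβ0))
          exact continuousAt_const.add (continuousAt_const.mul
            (ContinuousAt.comp (g := fun y : ℝ => y^β)
              (f := fun ε : ℝ => max (κ₂ * Filter.liminf lB atTop - ε) 0) hrc hmc))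
        · show (1 + τ * (max (κ₂ * Filter.liminf lB atTop - 0) 0)^β) ≠ 0
          have h1 : 0 ≤ max (κ₂ * Filter.liminf lB atTop - 0) 0 := le_max_right _ _
          have h2 := mul_nonneg (le_of_lt hτ) (Real.rpow_nonneg h1 β)
          exact ne_of_gt (by linarith only [h2])
    have hTend : Tendsto (fun ε : ℝ => (μA + κ₁ * Filter.limsup lA atTop + ε) *
        (1/(1 + τ * (max (κ₂ * Filter.liminf lB atTop - ε) 0)^β))) (𝓝[>] 0)
        (𝓝 ((μA + κ₁ * Filter.limsup lA atTop) *
          (1/(1 + τ * (κ₂ * Filter.liminf lB atTop)^β)))) := by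
      have h3' := hcont.tendsto.mono_left
        (nhdsWithin_le_nhds : 𝓝[Set.Ioi (0:ℝ)] 0 ≤ 𝓝 0)
      simpa [sub_zero, add_zero, hmax0] using h3'
    exact ge_of_tendsto hTend
      (eventually_mem_nhdsWithin.mono (fun ε hε => hstep ε hε))
  -- Step 6d: liminf lA bound
  have hLMge : (μA + κ₁ * Filter.liminf lA atTop) *
      (1/(1 + τ * (κ₂ * Filter.limsup lB atTop)^β)) ≤ Filter.liminf lA atTop := by
    have hstep : ∀ ε : ℝ, 0 < ε → (max (μA + κ₁ * Filter.liminf lA atTop - ε) 0) *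
        (1/(1 + τ * (κ₂ * Filter.limsup lB atTop + ε)^β)) ≤ Filter.liminf lA atTop := by
      intro ε hε
      apply le_liminf_of_le hBddAle.isCoboundedUnder_ge
      have hcl1 := conv_liminf_ge hm1 hp1 hi1 hcA hA0 hMAb hε
      have hcu2 := conv_limsup_le hm2 hp2 hi2 hcB hB0 hMBb hε
      filter_upwards [hcl1, hcu2, eventually_ge_atTop (0:ℝ)] with t h1 h2 ht0
      have hAt := heqA' t ht0
      set s := (1 - α) * convK h₂ lB t with hsdef
      have hs0 : 0 ≤ s := hconv2nn t ht0
      have hnum : max (μA + κ₁ * Filter.liminf lA atTop - ε) 0 ≤ μA + α * convK h₁ lA t := by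
        apply max_le
        · have h5 := mul_le_mul_of_nonneg_left h1 (le_of_lt hα0)
          have h6 : α * (l1 h₁ * Filter.liminf lA atTop) = κ₁ * Filter.liminf lA atTop := by
            rw [hκ₁]; ring
          linarith only [h5, h6, hfull' ε hε]
        · exact add_nonneg (le_of_lt hμA)
            (mul_nonneg (le_of_lt hα0) (convK_nonneg hm1 hp1 hi1 hcA hA0 ht0))
      have hsle : s ≤ κ₂ * Filter.limsup lB atTop + ε := by
        have h5 := mul_le_mul_of_nonneg_left h2 (le_of_lt hα1')
        have h6 : (1-α) * (l1 h₂ * Filter.limsup lB atTop) = κ₂ * Filter.limsup lB atTop := by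
          rw [hκ₂]; ring
        linarith only [h5, h6, hfull ε hε, hsdef]
      have hden : 1 + τ * s^β ≤ 1 + τ * (κ₂ * Filter.limsup lB atTop + ε)^β := by
        have hr := Real.rpow_le_rpow hs0 hsle (le_of_lt hβ0)
        have hr2 := mul_le_mul_of_nonneg_left hr (le_of_lt hτ)
        linarith only [hr2]
      have hspos : 0 < 1 + τ * s^β := by
        have hr := mul_nonneg (le_of_lt hτ) (Real.rpow_nonneg hs0 β)
        linarith only [hr]
      have hfrac : 1/(1 + τ * (κ₂ * Filter.limsup lB atTop + ε)^β) ≤ 1/(1 + τ * s^β) :=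
        one_div_le_one_div_of_le hspos hden
      have hfrac0 : 0 ≤ 1/(1 + τ * (κ₂ * Filter.limsup lB atTop + ε)^β) := by
        have hd2 : 0 < 1 + τ * (κ₂ * Filter.limsup lB atTop + ε)^β :=
          lt_of_lt_of_le hspos hden
        positivity
      have hnumnn : 0 ≤ μA + α * convK h₁ lA t :=
        add_nonneg (le_of_lt hμA)
          (mul_nonneg (le_of_lt hα0) (convK_nonneg hm1 hp1 hi1 hcA hA0 ht0))
      calc (max (μA + κ₁ * Filter.liminf lA atTop - ε) 0) *
          (1/(1 + τ * (κ₂ * Filter.limsup lB atTop + ε)^β))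
          ≤ (μA + α * convK h₁ lA t) * (1/(1 + τ * s^β)) :=
            mul_le_mul hnum hfrac hfrac0 hnumnn
        _ = lA t := hAt.symm
    have hnum0' : max (μA + κ₁ * Filter.liminf lA atTop) 0 = μA + κ₁ * Filter.liminf lA atTop :=
      max_eq_left (add_nonneg (le_of_lt hμA) (mul_nonneg hκ₁0 hLM0))
    have hcont : ContinuousAt (fun ε : ℝ => (max (μA + κ₁ * Filter.liminf lA atTop - ε) 0) *
        (1/(1 + τ * (κ₂ * Filter.limsup lB atTop + ε)^β))) 0 := by
      apply ContinuousAt.mul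
      · exact ((continuous_const.sub continuous_id).max continuous_const).continuousAt
      · apply ContinuousAt.div continuousAt_const
        · have hmc : ContinuousAt (fun ε : ℝ => κ₂ * Filter.limsup lB atTop + ε) 0 :=
            (continuous_const.add continuous_id).continuousAt
          have hrc : ContinuousAt (fun y : ℝ => y ^ β) (κ₂ * Filter.limsup lB atTop + 0) :=
            Real.continuousAt_rpow_const _ _ (Or.inr (le_of_lt hβ0))
          exact continuousAt_const.add (continuousAt_const.mul
            (ContinuousAt.comp (g := fun y : ℝ => y^β)
              (f := fun ε : ℝ => κ₂ * Filter.limsup lB atTop + ε) hrc hmc))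
        · have h1 : 0 ≤ κ₂ * Filter.limsup lB atTop + 0 := by
            rw [add_zero]; exact mul_nonneg (le_of_lt hk2) (le_trans hBM0 hBMBP)
          have h2 := mul_nonneg (le_of_lt hτ) (Real.rpow_nonneg h1 β)
          show (1 + τ * (κ₂ * Filter.limsup lB atTop + 0)^β) ≠ 0
          exact ne_of_gt (by linarith only [h2])
    have hTend : Tendsto (fun ε : ℝ => (max (μA + κ₁ * Filter.liminf lA atTop - ε) 0) *
        (1/(1 + τ * (κ₂ * Filter.limsup lB atTop + ε)^β))) (𝓝[>] 0)
        (𝓝 ((μA + κ₁ * Filter.liminf lA atTop) *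
          (1/(1 + τ * (κ₂ * Filter.limsup lB atTop)^β)))) := by
      have h3' := hcont.tendsto.mono_left
        (nhdsWithin_le_nhds : 𝓝[Set.Ioi (0:ℝ)] 0 ≤ 𝓝 0)
      simpa [sub_zero, add_zero, hnum0'] using h3'
    exact le_of_tendsto hTend
      (eventually_mem_nhdsWithin.mono (fun ε hε => hstep ε hε))
  -- Step 6e: algebraic reformulation
  have hLPle2 : Filter.limsup lA atTop ≤
      μA / (1 - κ₁ + τ * (κ₂ * Filter.liminf lB atTop)^β) := by
    have hQpos : 0 < 1 + τ * (κ₂ * Filter.liminf lB atTop)^β := by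
      have hr := mul_nonneg (le_of_lt hτ)
        (Real.rpow_nonneg (mul_nonneg (le_of_lt hk2) hBM0) β)
      linarith only [hr]
    rw [le_div_iff₀ (by linarith only [hPBM] : 0 < 1 - κ₁ + τ * (κ₂ * Filter.liminf lB atTop)^β)]
    have h2 := mul_le_mul_of_nonneg_right hLPle (le_of_lt hQpos)
    have h3 : ((μA + κ₁ * Filter.limsup lA atTop) *
        (1/(1 + τ * (κ₂ * Filter.liminf lB atTop)^β))) *
        (1 + τ * (κ₂ * Filter.liminf lB atTop)^β) =
        μA + κ₁ * Filter.limsup lA atTop := by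
      field_simp
    rw [h3] at h2
    linarith only [h2]
  have hLMge2 : μA / (1 - κ₁ + τ * (κ₂ * Filter.limsup lB atTop)^β) ≤
      Filter.liminf lA atTop := by
    have hQpos : 0 < 1 + τ * (κ₂ * Filter.limsup lB atTop)^β := by
      have hr := mul_nonneg (le_of_lt hτ)
        (Real.rpow_nonneg (mul_nonneg (le_of_lt hk2) (le_trans hBM0 hBMBP)) β)
      linarith only [hr]
    rw [div_le_iff₀ (by linarith only [hPBP] : 0 < 1 - κ₁ + τ * (κ₂ * Filter.limsup lB atTop)^β)]
    have h2 := mul_le_mul_of_nonneg_right hLMge (le_of_lt hQpos)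
    have h3 : ((μA + κ₁ * Filter.liminf lA atTop) *
        (1/(1 + τ * (κ₂ * Filter.limsup lB atTop)^β))) *
        (1 + τ * (κ₂ * Filter.limsup lB atTop)^β) =
        μA + κ₁ * Filter.liminf lA atTop := by
      field_simp
    rw [h3] at h2
    linarith only [h2]
  -- Step 7: combine via the fixed-point map
  have hFid : ∀ x, c ≤ x →
      (μB + κ₄ * (μA / (1 - κ₁ + τ * (κ₂ * x)^β)))/(1-κ₃) = Fmap τ β κ₁ κ₂ c D' x := by
    intro x hx
    have hDne : (1 - κ₁ + τ * (κ₂ * x)^β) ≠ 0 := ne_of_gt (hDpos x hx)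
    have hne : (1:ℝ) - κ₃ ≠ 0 := ne_of_gt h1κ₃
    show _ = c + D' / Dden τ β κ₁ κ₂ x
    rw [hcdef, hD'def]
    show (μB + κ₄ * (μA / (1 - κ₁ + τ * (κ₂ * x)^β)))/(1-κ₃) =
      μB/(1-κ₃) + (μA * κ₄/(1-κ₃)) / (1 - κ₁ + τ * (κ₂ * x)^β)
    field_simp
  have hBPF : Filter.limsup lB atTop ≤ Fmap τ β κ₁ κ₂ c D' (Filter.liminf lB atTop) := by
    have h1 : Filter.limsup lB atTop ≤ (μB + κ₄ * Filter.limsup lA atTop)/(1-κ₃) := by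
      rw [le_div_iff₀ h1κ₃]
      linarith only [hBPle]
    have h2 : (μB + κ₄ * Filter.limsup lA atTop)/(1-κ₃) ≤
        (μB + κ₄ * (μA / (1 - κ₁ + τ * (κ₂ * Filter.liminf lB atTop)^β)))/(1-κ₃) := by
      have hnum2 : μB + κ₄ * Filter.limsup lA atTop ≤
          μB + κ₄ * (μA / (1 - κ₁ + τ * (κ₂ * Filter.liminf lB atTop)^β)) := by
        have hmm := mul_le_mul_of_nonneg_left hLPle2 (le_of_lt hk4)
        linarith only [hmm]
      exact (div_le_div_iff_of_pos_right h1κ₃).2 hnum2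
    rw [← hFid _ hBMc]
    exact le_trans h1 h2
  have hFBP : Fmap τ β κ₁ κ₂ c D' (Filter.limsup lB atTop) ≤ Filter.liminf lB atTop := by
    have h1 : (μB + κ₄ * Filter.liminf lA atTop)/(1-κ₃) ≤ Filter.liminf lB atTop := by
      rw [div_le_iff₀ h1κ₃]
      linarith only [hBMge]
    have h2 : (μB + κ₄ * (μA / (1 - κ₁ + τ * (κ₂ * Filter.limsup lB atTop)^β)))/(1-κ₃) ≤
        (μB + κ₄ * Filter.liminf lA atTop)/(1-κ₃) := by
      have hnum2 : μB + κ₄ * (μA / (1 - κ₁ + τ * (κ₂ * Filter.limsup lB atTop)^β)) ≤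
          μB + κ₄ * Filter.liminf lA atTop := by
        have hmm := mul_le_mul_of_nonneg_left hLMge2 (le_of_lt hk4)
        linarith only [hmm]
      exact (div_le_div_iff_of_pos_right h1κ₃).2 hnum2
    rw [← hFid _ hBPc]
    exact le_trans h2 h1
  obtain ⟨hBMeq, hBPeq⟩ := Fmap_sandwich hτ hβ0 hβ1 hk2 hc0 hD'pos hcrit'
    hℓc hℓfix hℓuniq hBMc hBMBP hBPF hFBP
  have hTendB : Tendsto lB atTop (𝓝 ℓ) := by
    apply tendsto_of_le_liminf_of_limsup_le (le_of_eq hBMeq.symm) (le_of_eq hBPeq)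
      hBddBle hBddBge
  refine ⟨hTendB, ?_⟩
  have hLPle3 : Filter.limsup lA atTop ≤ μA / (1 - κ₁ + τ * (κ₂ * ℓ)^β) := by
    rw [← hBMeq]; exact hLPle2
  have hLMge3 : μA / (1 - κ₁ + τ * (κ₂ * ℓ)^β) ≤ Filter.liminf lA atTop := by
    rw [← hBPeq]; exact hLMge2
  exact tendsto_of_le_liminf_of_limsup_le hLMge3 hLPle3 hBddAle hBddAge
end
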